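/- arXiv:0811.2835 — 7 statements merged into one kernel-verified Lean document; each statement's English description precedes it below -/
import Mathlib

section
/- Let e and f be two orthonormal vectors in a complex Hilbert space H, let μ > 0 and 0 ≤ λ ≤ 1. Define ν = (1-λ)λ/((1+μ-λ)(μ+λ)) and ρ = (1-λ)μ/(μ+λ), and set w = √ρ·f - √(1-ρ)·e and v = √ν·f + √(1-ν)·e. Then w and v are unit vectors (so the rank-one operators w⊗w and v⊗v are projections) and (1+μ)(e⊗e) + (1-λ)(f⊗f) = w⊗w + (1+μ-λ)(v⊗v). -/
/-!
In the orthonormal pair `(e, f)` every operator in sight is a real symmetric `2 × 2` matrix, and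
`x ⊗ x` for `x = a f + b e` has entries `a², b²` on the diagonal and `a b` off it. With
`ρ + (1 + μ - λ) ν = 1 - λ`, the diagonal entries of the two sides agree, and the off-diagonal
entries `-√(ρ (1 - ρ))` and `(1 + μ - λ) √(ν (1 - ν))` cancel because
`ρ (1 - ρ) = (1 + μ - λ)² ν (1 - ν)`.
-/

open scoped InnerProductSpace

variable {H : Type*} [NormedAddCommGroup H] [InnerProductSpace ℂ H] [CompleteSpace H]

/-- The rank-one operator `x ⊗ x : y ↦ ⟨x, y⟩ • x` associated to a vector `x`. -/
noncomputable def rankOne (x : H) : H →L[ℂ] H := (innerSL ℂ x).smulRight x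

omit [CompleteSpace H] in
theorem rankOne_ofReal_smul_add_ofReal_smul (a b : ℝ) (x y : H) :
    rankOne ((a : ℂ) • x + (b : ℂ) • y)
      = ((a ^ 2 : ℝ) : ℂ) • rankOne x + ((b ^ 2 : ℝ) : ℂ) • rankOne y
        + ((a * b : ℝ) : ℂ) • ((innerSL ℂ x).smulRight y + (innerSL ℂ y).smulRight x) := by
  ext z
  simp only [rankOne, add_apply, smul_apply,
    ContinuousLinearMap.smulRight_apply, innerSL_apply_apply, inner_add_left, inner_smul_left,
    Complex.conj_ofReal]
  push_cast
  module

omit [CompleteSpace H] in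
theorem norm_ofReal_smul_add_ofReal_smul {x y : H} (hx : ‖x‖ = 1) (hy : ‖y‖ = 1)
    (hxy : ⟪x, y⟫_ℂ = 0) {a b : ℝ} (hab : a ^ 2 + b ^ 2 = 1) :
    ‖(a : ℂ) • x + (b : ℂ) • y‖ = 1 := by
  have hsq : ‖(a : ℂ) • x + (b : ℂ) • y‖ ^ 2 = 1 := by
    rw [sq, norm_add_sq_eq_norm_sq_add_norm_sq_of_inner_eq_zero _ _
        (by rw [inner_smul_left, inner_smul_right, hxy, mul_zero, mul_zero]),
      norm_smul, norm_smul, Complex.norm_real, Complex.norm_real, hx, hy]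
    simp only [Real.norm_eq_abs, mul_one, abs_mul_abs_self]
    linear_combination hab
  exact (pow_eq_one_iff_of_nonneg (norm_nonneg _) two_ne_zero).mp hsq

theorem rho_mem_Icc {μ lam ρ : ℝ} (hμ : 0 < μ) (hlam0 : 0 ≤ lam) (hlam1 : lam ≤ 1)
    (hρ : ρ = (1 - lam) * μ / (μ + lam)) : ρ ∈ Set.Icc 0 1 := by
  have hd : 0 < μ + lam := by linarith
  subst hρ
  exact ⟨by have := sub_nonneg.2 hlam1; positivity, (div_le_one hd).2 (by nlinarith)⟩

theorem nu_mem_Icc {μ lam ν : ℝ} (hμ : 0 < μ) (hlam0 : 0 ≤ lam) (hlam1 : lam ≤ 1)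
    (hν : ν = (1 - lam) * lam / ((1 + μ - lam) * (μ + lam))) : ν ∈ Set.Icc 0 1 := by
  have hd : 0 < (1 + μ - lam) * (μ + lam) := mul_pos (by linarith) (by linarith)
  subst hν
  exact ⟨div_nonneg (mul_nonneg (sub_nonneg.2 hlam1) hlam0) hd.le,
    (div_le_one hd).2 (by nlinarith)⟩

theorem rho_add_mul_nu {μ lam ν ρ : ℝ} (hd₁ : μ + lam ≠ 0) (hd₂ : 1 + μ - lam ≠ 0)
    (hν : ν = (1 - lam) * lam / ((1 + μ - lam) * (μ + lam)))
    (hρ : ρ = (1 - lam) * μ / (μ + lam)) :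
    ρ + (1 + μ - lam) * ν = 1 - lam := by
  subst hν hρ
  field_simp

theorem sqrt_rho_mul_sqrt_one_sub_rho {μ lam ν ρ : ℝ} (hμ : 0 < μ) (hlam0 : 0 ≤ lam)
    (hlam1 : lam ≤ 1) (hν : ν = (1 - lam) * lam / ((1 + μ - lam) * (μ + lam)))
    (hρ : ρ = (1 - lam) * μ / (μ + lam)) :
    √ρ * √(1 - ρ) = (1 + μ - lam) * (√ν * √(1 - ν)) := by
  have hd₁ : μ + lam ≠ 0 := by linarith
  have hd₂ : 0 < 1 + μ - lam := by linarith
  have hsq : ρ * (1 - ρ) = (1 + μ - lam) ^ 2 * (ν * (1 - ν)) := by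
    subst hν hρ
    field_simp
    ring
  rw [← Real.sqrt_mul (rho_mem_Icc hμ hlam0 hlam1 hρ).1,
    ← Real.sqrt_mul (nu_mem_Icc hμ hlam0 hlam1 hν).1, hsq,
    Real.sqrt_mul (sq_nonneg _), Real.sqrt_sq hd₂.le]

/-- Lemma 2.1: for orthonormal vectors `e, f`, `μ > 0`, `0 ≤ λ ≤ 1`, with
`ν = (1-λ)λ/((1+μ-λ)(μ+λ))`, `ρ = (1-λ)μ/(μ+λ)`, `w = √ρ f - √(1-ρ) e`,
`v = √ν f + √(1-ν) e`, the vectors `w, v` are unit vectors and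
`(1+μ)(e⊗e) + (1-λ)(f⊗f) = w⊗w + (1+μ-λ)(v⊗v)`. -/
theorem stmt_0 (e f : H) (he : ‖e‖ = 1) (hf : ‖f‖ = 1) (hef : ⟪e, f⟫_ℂ = 0)
    (μ lam : ℝ) (hμ : 0 < μ) (hlam0 : 0 ≤ lam) (hlam1 : lam ≤ 1)
    (ν ρ : ℝ)
    (hν : ν = (1 - lam) * lam / ((1 + μ - lam) * (μ + lam)))
    (hρ : ρ = (1 - lam) * μ / (μ + lam))
    (w v : H)
    (hw : w = (Real.sqrt ρ : ℂ) • f - (Real.sqrt (1 - ρ) : ℂ) • e)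
    (hv : v = (Real.sqrt ν : ℂ) • f + (Real.sqrt (1 - ν) : ℂ) • e) :
    ‖w‖ = 1 ∧ ‖v‖ = 1 ∧
      ((1 + μ : ℝ) : ℂ) • rankOne e + ((1 - lam : ℝ) : ℂ) • rankOne f
        = rankOne w + ((1 + μ - lam : ℝ) : ℂ) • rankOne v := by
  obtain ⟨hρ0, hρ1⟩ := rho_mem_Icc hμ hlam0 hlam1 hρ
  obtain ⟨hν0, hν1⟩ := nu_mem_Icc hμ hlam0 hlam1 hν
  have hfe : ⟪f, e⟫_ℂ = 0 := inner_eq_zero_symm.mp hef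
  have hw' : w = (√ρ : ℂ) • f + ((-√(1 - ρ) : ℝ) : ℂ) • e := by
    rw [hw, Complex.ofReal_neg, neg_smul, sub_eq_add_neg]
  refine ⟨?_, ?_, ?_⟩
  · rw [hw']
    refine norm_ofReal_smul_add_ofReal_smul hf he hfe ?_
    rw [neg_sq, Real.sq_sqrt hρ0, Real.sq_sqrt (sub_nonneg.2 hρ1)]
    ring
  · rw [hv]
    refine norm_ofReal_smul_add_ofReal_smul hf he hfe ?_
    rw [Real.sq_sqrt hν0, Real.sq_sqrt (sub_nonneg.2 hν1)]
    ring
  · have hdiag := congrArg Complex.ofReal (rho_add_mul_nu (by linarith) (by linarith) hν hρ)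
    have hcross := congrArg Complex.ofReal
      (sqrt_rho_mul_sqrt_one_sub_rho hμ hlam0 hlam1 hν hρ)
    rw [hw', hv, rankOne_ofReal_smul_add_ofReal_smul, rankOne_ofReal_smul_add_ofReal_smul, neg_sq,
      Real.sq_sqrt hρ0, Real.sq_sqrt (sub_nonneg.2 hρ1), Real.sq_sqrt hν0,
      Real.sq_sqrt (sub_nonneg.2 hν1)]
    push_cast at hdiag hcross ⊢
    linear_combination (norm := module) hdiag • (rankOne e - rankOne f)
      + hcross • ((innerSL ℂ f).smulRight e + (innerSL ℂ e).smulRight f)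
end

section
/- In the 2×2 complex matrices: for μ ≥ 0 and 0 ≤ λ ≤ 1, defining ρ and ν as ρ = (1-λ)μ/(μ+λ) and ν = (1-λ)λ/((1+μ-λ)(μ+λ)) when μ ≠ 0 (and ρ = 0, ν = 1 when μ = 0), we have diag(1+μ, 1-λ) = P₋ + (1+μ-λ)·P₊, where P₋ = [[1-ρ, -√(ρ(1-ρ))],[-√(ρ(1-ρ)), ρ]] and P₊ = [[1-ν, √(ν(1-ν))],[√(ν(1-ν)), ν]], and both P₋ and P₊ are self-adjoint idempotent matrices (projections). -/
open Matrix Set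

/-! A real 2×2 symmetric matrix `!![1 - t, s; s, t]` is a projection as soon as
`s² = t (1 - t)`, which for `t ∈ [0, 1]` is solved by `s = ±√(t (1 - t))`. Matching entries,
with `c = 1 + μ - λ` the decomposition amounts to the two scalar identities `ρ + c ν = 1 - λ`
(the other diagonal entry then follows from the trace) and `ρ (1 - ρ) = c² ν (1 - ν)` (for the
off-diagonal entries, since `c ≥ 0`); both are checked by clearing denominators. -/

theorem Matrix.isSymm_fin_two {α : Type*} (a b c : α) : (!![a, b; b, c]).IsSymm := by
  ext i j
  fin_cases i <;> fin_cases j <;> rfl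

theorem Matrix.isIdempotentElem_fin_two {R : Type*} [CommRing R] {t s : R}
    (h : s * s = t * (1 - t)) : IsIdempotentElem !![1 - t, s; s, t] := by
  rw [IsIdempotentElem, mul_fin_two, h]
  ext i j
  fin_cases i <;> fin_cases j <;> simp <;> ring

theorem Matrix.diagonal_eq_add_smul_fin_two {R : Type*} [CommRing R] {x y c ρ ν a b : R}
    (hx : 1 - ρ + c * (1 - ν) = x) (hy : ρ + c * ν = y) (hab : a = c * b) :
    diagonal ![x, y] = !![1 - ρ, -a; -a, ρ] + c • !![1 - ν, b; b, ν] := by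
  subst hx hy hab
  ext i j
  fin_cases i <;> fin_cases j <;> simp

theorem Real.mul_self_sqrt_mul_one_sub {t : ℝ} (ht : t ∈ Icc 0 1) :
    √(t * (1 - t)) * √(t * (1 - t)) = t * (1 - t) :=
  Real.mul_self_sqrt (mul_nonneg ht.1 (sub_nonneg.2 ht.2))

namespace DiagonalSplit

noncomputable def rho (μ lam : ℝ) : ℝ :=
  if μ = 0 then 0 else (1 - lam) * μ / (μ + lam)

noncomputable def nu (μ lam : ℝ) : ℝ :=
  if μ = 0 then 1 else (1 - lam) * lam / ((1 + μ - lam) * (μ + lam))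

theorem rho_add_mul_nu {μ lam : ℝ} (hμ : 0 ≤ μ) (hlam0 : 0 ≤ lam) (hlam1 : lam ≤ 1) :
    rho μ lam + (1 + μ - lam) * nu μ lam = 1 - lam := by
  rcases hμ.eq_or_lt with rfl | hμ
  · simp [rho, nu]
  have : 0 < μ + lam := by linarith
  have : 0 < 1 + μ - lam := by linarith
  simp only [rho, nu, hμ.ne', if_false]
  field_simp

theorem rho_mul_one_sub_rho {μ lam : ℝ} (hμ : 0 ≤ μ) (hlam0 : 0 ≤ lam) (hlam1 : lam ≤ 1) :
    rho μ lam * (1 - rho μ lam) = (1 + μ - lam) ^ 2 * (nu μ lam * (1 - nu μ lam)) := by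
  rcases hμ.eq_or_lt with rfl | hμ
  · simp [rho, nu]
  have : 0 < μ + lam := by linarith
  have : 0 < 1 + μ - lam := by linarith
  simp only [rho, nu, hμ.ne', if_false]
  field_simp
  ring

theorem rho_mem_Icc {μ lam : ℝ} (hμ : 0 ≤ μ) (hlam0 : 0 ≤ lam) (hlam1 : lam ≤ 1) :
    rho μ lam ∈ Icc 0 1 := by
  rcases hμ.eq_or_lt with rfl | hμ
  · simp [rho]
  have hpos : 0 < μ + lam := by linarith
  simp only [rho, hμ.ne', if_false]
  exact ⟨by positivity, div_le_one_of_le₀ (by nlinarith) hpos.le⟩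

theorem nu_mem_Icc {μ lam : ℝ} (hμ : 0 ≤ μ) (hlam0 : 0 ≤ lam) (hlam1 : lam ≤ 1) :
    nu μ lam ∈ Icc 0 1 := by
  rcases hμ.eq_or_lt with rfl | hμ
  · simp [nu]
  have : 0 < μ + lam := by linarith
  have : 0 < 1 + μ - lam := by linarith
  simp only [nu, hμ.ne', if_false]
  exact ⟨by positivity, div_le_one_of_le₀ (by nlinarith) (by positivity)⟩

end DiagonalSplit

open DiagonalSplit

/-- The 2×2 matrix version of Lemma 2.1: with `ρ, ν` as prescribed,
`diag (1+μ, 1-λ) = P₋ + (1+μ-λ) P₊`, where `P₋, P₊` are the indicated symmetric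
idempotent (projection) matrices. -/
theorem stmt_2 (μ lam : ℝ) (hμ : 0 ≤ μ) (hlam0 : 0 ≤ lam) (hlam1 : lam ≤ 1)
    (ρ ν : ℝ)
    (hρ : ρ = if μ = 0 then 0 else (1 - lam) * μ / (μ + lam))
    (hν : ν = if μ = 0 then 1 else (1 - lam) * lam / ((1 + μ - lam) * (μ + lam)))
    (Pm Pp : Matrix (Fin 2) (Fin 2) ℝ)
    (hPm : Pm = !![1 - ρ, -Real.sqrt (ρ * (1 - ρ)); -Real.sqrt (ρ * (1 - ρ)), ρ])
    (hPp : Pp = !![1 - ν, Real.sqrt (ν * (1 - ν)); Real.sqrt (ν * (1 - ν)), ν]) :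
    Matrix.diagonal ![1 + μ, 1 - lam] = Pm + (1 + μ - lam) • Pp ∧
      Pmᵀ = Pm ∧ Pm * Pm = Pm ∧ Ppᵀ = Pp ∧ Pp * Pp = Pp := by
  obtain rfl : ρ = rho μ lam := hρ
  obtain rfl : ν = nu μ lam := hν
  subst hPm hPp
  have hsum := rho_add_mul_nu hμ hlam0 hlam1
  have hsqrt :
      √(rho μ lam * (1 - rho μ lam)) = (1 + μ - lam) * √(nu μ lam * (1 - nu μ lam)) := by
    rw [rho_mul_one_sub_rho hμ hlam0 hlam1, Real.sqrt_mul (sq_nonneg _),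
      Real.sqrt_sq (by linarith)]
  refine ⟨diagonal_eq_add_smul_fin_two (by linarith) hsum hsqrt, (isSymm_fin_two ..).eq,
    isIdempotentElem_fin_two ?_, (isSymm_fin_two ..).eq, isIdempotentElem_fin_two ?_⟩
  · rw [neg_mul_neg]
    exact Real.mul_self_sqrt_mul_one_sub (rho_mem_Icc hμ hlam0 hlam1)
  · exact Real.mul_self_sqrt_mul_one_sub (nu_mem_Icc hμ hlam0 hlam1)
end

section
/- Let P and Q be rank-one projections on a complex Hilbert space H and let a ≤ c ≤ b be nonnegative reals. Then there exist rank-one projections P' and Q' on H such that a·P + b·Q = c·P' + (a+b-c)·Q'. -/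
/-! Writing `x₁ = √a x` and `y₁ = √b y`, the operator `aP + bQ` is `x₁x₁* + y₁y₁*`, and this sum
is unchanged when the pair `(x₁, y₁)` is rotated by a real angle `θ`. Along the quarter turn the
squared norm of the first rotated vector moves continuously from `a` to `b`, so it equals `c` for
some `θ`; the rotation preserves `‖x₁‖² + ‖y₁‖²`, so the second has squared norm `a + b - c`.
Normalising the two rotated vectors gives `P'` and `Q'`. -/

open scoped InnerProductSpace

variable {H : Type*} [NormedAddCommGroup H] [InnerProductSpace ℂ H] [CompleteSpace H]

/-- A rank-one (orthogonal) projection: the projection onto the span of a unit vector. -/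
def IsRankOneProjection (P : H →L[ℂ] H) : Prop := ∃ x : H, ‖x‖ = 1 ∧ P = rankOne x

section RankOne

variable {E : Type*} [NormedAddCommGroup E] [InnerProductSpace ℂ E]

lemma rankOne_apply (x z : E) : rankOne x z = ⟪x, z⟫_ℂ • x := rfl

lemma rankOne_smul (t : ℂ) (x : E) : rankOne (t • x) = ((‖t‖ ^ 2 : ℝ) : ℂ) • rankOne x := by
  ext z
  simp only [rankOne_apply, smul_apply, inner_smul_left, smul_smul]
  rw [mul_right_comm, Complex.conj_mul']
  push_cast
  rfl

lemma exists_rankOne_eq_smul_rankOne {x : E} (hx : ‖x‖ = 1) {a : ℝ} (ha : 0 ≤ a) :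
    ∃ w : E, ‖w‖ ^ 2 = a ∧ rankOne w = (a : ℂ) • rankOne x := by
  have hsqrt : ‖(Real.sqrt a : ℂ)‖ ^ 2 = a := by
    rw [Complex.norm_real, Real.norm_of_nonneg (Real.sqrt_nonneg a), Real.sq_sqrt ha]
  refine ⟨(Real.sqrt a : ℂ) • x, ?_, ?_⟩
  · rw [norm_smul, hx, mul_one, hsqrt]
  · rw [rankOne_smul, hsqrt]

lemma exists_isRankOneProjection_smul_eq_rankOne [Nontrivial E] (w : E) :
    ∃ P : E →L[ℂ] E, IsRankOneProjection P ∧ ((‖w‖ ^ 2 : ℝ) : ℂ) • P = rankOne w := by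
  obtain rfl | hw := eq_or_ne w 0
  · obtain ⟨e, he⟩ := exists_norm_eq E zero_le_one
    exact ⟨rankOne e, ⟨e, he, rfl⟩, by simp [rankOne]⟩
  have hnorm : ‖w‖ ≠ 0 := norm_ne_zero_iff.mpr hw
  refine ⟨rankOne ((‖w‖⁻¹ : ℂ) • w), ⟨_, ?_, rfl⟩, ?_⟩
  · rw [norm_smul, norm_inv, Complex.norm_real, norm_norm, inv_mul_cancel₀ hnorm]
  · rw [rankOne_smul, smul_smul, ← Complex.ofReal_inv, Complex.norm_real, norm_inv, norm_norm,
      ← Complex.ofReal_mul, ← mul_pow, mul_inv_cancel₀ hnorm, one_pow, Complex.ofReal_one,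
      one_smul]

lemma rankOne_rotate_add {p q : ℝ} (hpq : p ^ 2 + q ^ 2 = 1) (x y : E) :
    rankOne ((p : ℂ) • x - (q : ℂ) • y) + rankOne ((q : ℂ) • x + (p : ℂ) • y)
      = rankOne x + rankOne y := by
  have h : (p : ℂ) ^ 2 + (q : ℂ) ^ 2 = 1 := by exact_mod_cast hpq
  ext z
  simp only [rankOne_apply, add_apply, inner_sub_left, inner_add_left,
    inner_smul_left, Complex.conj_ofReal, smul_sub, smul_add, smul_smul]
  match_scalars
  · linear_combination ⟪x, z⟫_ℂ * h
  · linear_combination ⟪y, z⟫_ℂ * h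

lemma norm_sq_rotate_add {p q : ℝ} (hpq : p ^ 2 + q ^ 2 = 1) (x y : E) :
    ‖(p : ℂ) • x - (q : ℂ) • y‖ ^ 2 + ‖(q : ℂ) • x + (p : ℂ) • y‖ ^ 2 = ‖x‖ ^ 2 + ‖y‖ ^ 2 := by
  have h : (p : ℂ) ^ 2 + (q : ℂ) ^ 2 = 1 := by exact_mod_cast hpq
  have hinner : ⟪(p : ℂ) • x - (q : ℂ) • y, (p : ℂ) • x - (q : ℂ) • y⟫_ℂ
      + ⟪(q : ℂ) • x + (p : ℂ) • y, (q : ℂ) • x + (p : ℂ) • y⟫_ℂ = ⟪x, x⟫_ℂ + ⟪y, y⟫_ℂ := by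
    simp only [inner_sub_left, inner_sub_right, inner_add_left, inner_add_right,
      inner_smul_left, inner_smul_right, Complex.conj_ofReal]
    linear_combination (⟪x, x⟫_ℂ + ⟪y, y⟫_ℂ) * h
  simp only [inner_self_eq_norm_sq_to_K] at hinner
  exact_mod_cast hinner

lemma exists_rotate_norm_sq_eq (x y : E) {c : ℝ} (hc : c ∈ Set.Icc (‖x‖ ^ 2) (‖y‖ ^ 2)) :
    ∃ p q : ℝ, p ^ 2 + q ^ 2 = 1 ∧ ‖(p : ℂ) • x - (q : ℂ) • y‖ ^ 2 = c := by
  let f : ℝ → ℝ := fun θ ↦ ‖(Real.cos θ : ℂ) • x - (Real.sin θ : ℂ) • y‖ ^ 2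
  have hf : Continuous f := by fun_prop
  have hf0 : f 0 = ‖x‖ ^ 2 := by simp [f]
  have hfpi : f (Real.pi / 2) = ‖y‖ ^ 2 := by simp [f]
  obtain ⟨θ, -, hθ⟩ := intermediate_value_Icc (by positivity) hf.continuousOn
    (hf0 ▸ hfpi ▸ hc)
  exact ⟨Real.cos θ, Real.sin θ, Real.cos_sq_add_sin_sq θ, hθ⟩

lemma exists_rankOne_add_rankOne_eq (x y : E) {c : ℝ}
    (hc : c ∈ Set.Icc (‖x‖ ^ 2) (‖y‖ ^ 2)) :
    ∃ u v : E, ‖u‖ ^ 2 = c ∧ ‖v‖ ^ 2 = ‖x‖ ^ 2 + ‖y‖ ^ 2 - c ∧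
      rankOne x + rankOne y = rankOne u + rankOne v := by
  obtain ⟨p, q, hpq, hu⟩ := exists_rotate_norm_sq_eq x y hc
  refine ⟨_, _, hu, ?_, (rankOne_rotate_add hpq x y).symm⟩
  linarith [norm_sq_rotate_add hpq x y]

end RankOne

/-- Lemma 2.2: if `P, Q` are rank-one projections and `0 ≤ a ≤ c ≤ b`, then there are
rank-one projections `P', Q'` with `aP + bQ = cP' + (a+b-c)Q'`. -/
theorem stmt_3 (P Q : H →L[ℂ] H) (hP : IsRankOneProjection P) (hQ : IsRankOneProjection Q)
    (a b c : ℝ) (ha : 0 ≤ a) (hac : a ≤ c) (hcb : c ≤ b) :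
    ∃ P' Q' : H →L[ℂ] H, IsRankOneProjection P' ∧ IsRankOneProjection Q' ∧
      (a : ℂ) • P + (b : ℂ) • Q = (c : ℂ) • P' + ((a + b - c : ℝ) : ℂ) • Q' := by
  obtain ⟨x, hx, rfl⟩ := hP
  obtain ⟨y, hy, rfl⟩ := hQ
  have : Nontrivial H := nontrivial_of_ne x 0 (norm_ne_zero_iff.mp (by simp [hx]))
  obtain ⟨x₁, hx₁, hax⟩ := exists_rankOne_eq_smul_rankOne hx ha
  obtain ⟨y₁, hy₁, hby⟩ := exists_rankOne_eq_smul_rankOne hy (ha.trans (hac.trans hcb))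
  obtain ⟨u, v, hu, hv, hsum⟩ := exists_rankOne_add_rankOne_eq x₁ y₁ (c := c)
    (by rw [hx₁, hy₁]; exact ⟨hac, hcb⟩)
  obtain ⟨P', hP', hcP⟩ := exists_isRankOneProjection_smul_eq_rankOne u
  obtain ⟨Q', hQ', hdQ⟩ := exists_isRankOneProjection_smul_eq_rankOne v
  refine ⟨P', Q', hP', hQ', ?_⟩
  rw [← hax, ← hby, hsum, ← hcP, ← hdQ, hu, hv, hx₁, hy₁]
end

section
/- Let M be a von Neumann algebra, A ∈ M with 0 ≤ A ≤ 2I, R_A = I (A has dense range), and suppose there is a unitary U ∈ M with UAU* = 2I - A. Then A is the sum of two projections in M. -/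
/-!
Put `B = A - 1`. Then `B² ≤ 1`, `U` anticommutes with `B`, and `A = P + Q` with
`P, Q = (1 + B ± C) / 2` as soon as `C ∈ M` is self-adjoint with `C² = 1 - B²` and `CB = -BC`.
Such a `C` is `J √(1 - B²)`, where `J = W* U` is a self-adjoint unitary anticommuting with `B`
and `W ∈ M` is a unitary square root of `U²` commuting with everything that commutes with `U²`,
in particular with `U` and `B`. Writing `U² = exp (iθ)`, we take `W = cos (θ/2) + i sin (θ/2)`:
`cos (θ/2)` is a continuous function of `U²`, and `sin (θ/2)` is obtained from `sin θ / 2` by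
dividing by `cos (θ/2)` on the closure of its range, so no Borel functional calculus is needed.
-/

variable {H : Type*} [NormedAddCommGroup H] [InnerProductSpace ℂ H] [CompleteSpace H]

/-- A (self-adjoint idempotent) projection in `B(H)`. -/
def IsProjectionOp (P : H →L[ℂ] H) : Prop := IsSelfAdjoint P ∧ P * P = P

namespace ContinuousLinearMap

variable {𝕜 E F : Type*} [RCLike 𝕜] [NormedAddCommGroup E] [InnerProductSpace 𝕜 E]
  [CompleteSpace E] [NormedAddCommGroup F] [NormedSpace 𝕜 F]

theorem orthogonal_ker_of_isSelfAdjoint {c : E →L[𝕜] E} (hc : IsSelfAdjoint c) :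
    (c : E →ₗ[𝕜] E).kerᗮ = (c : E →ₗ[𝕜] E).range.topologicalClosure := by
  rw [orthogonal_ker, hc.adjoint_eq]

theorem eq_of_eqOn_range_of_eqOn_ker {c : E →L[𝕜] E} (hc : IsSelfAdjoint c)
    {f g : E →L[𝕜] F} (hrange : ∀ x, f (c x) = g (c x))
    (hker : ∀ k ∈ (c : E →ₗ[𝕜] E).ker, f k = g k) : f = g := by
  have hK : (c : E →ₗ[𝕜] E).ker ≤ (f - g : E →ₗ[𝕜] F).ker := fun k hk => by
    simp [hker k hk]
  have hR : (c : E →ₗ[𝕜] E).kerᗮ ≤ (f - g : E →ₗ[𝕜] F).ker := by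
    rw [orthogonal_ker_of_isSelfAdjoint hc]
    refine Submodule.topologicalClosure_minimal _ ?_ (f - g).isClosed_ker
    rintro _ ⟨y, rfl⟩
    simpa [sub_eq_zero] using hrange y
  have htop := Submodule.sup_orthogonal_of_hasOrthogonalProjection (K := (c : E →ₗ[𝕜] E).ker)
  ext x
  have hx : x ∈ (f - g : E →ₗ[𝕜] F).ker := sup_le hK hR (htop ▸ Submodule.mem_top)
  simpa [sub_eq_zero] using hx

theorem exists_mul_eq_of_norm_apply_le {c m : E →L[𝕜] E} (hc : IsSelfAdjoint c)
    (hmc : ∀ x, ‖m x‖ ≤ ‖c x‖) :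
    ∃ s : E →L[𝕜] E, s * c = m ∧ ∀ k ∈ (c : E →ₗ[𝕜] E).ker, s k = k := by
  set K := (c : E →ₗ[𝕜] E).kerᗮ with hK
  rw [orthogonal_ker_of_isSelfAdjoint hc] at hK
  have hcK : ∀ x, c x ∈ K := by
    rw [hK]
    exact fun x => Submodule.le_topologicalClosure _ ⟨x, rfl⟩
  let e : E →ₗ[𝕜] K := (c : E →ₗ[𝕜] E).codRestrict K hcK
  have he : DenseRange e := by
    rw [DenseRange, Subtype.dense_iff, ← Set.range_comp]
    intro x hx
    rwa [hK] at hx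
  let t : K →L[𝕜] E := (m : E →ₗ[𝕜] E).extendOfNorm e
  have ht : ∀ x, t (e x) = m x :=
    LinearMap.extendOfNorm_eq he ⟨1, fun x => by simpa [e] using hmc x⟩
  refine ⟨t ∘L K.orthogonalProjectionOnto + (1 - K.starProjection), ?_, fun k hk => ?_⟩
  · ext x
    have hP : K.orthogonalProjectionOnto (c x) = e x :=
      Submodule.orthogonalProjectionOnto_mem_subspace_eq_self (e x)
    simp [hP, ht, Submodule.starProjection_apply, e]
  · have hP : K.orthogonalProjectionOnto k = 0 :=
      Submodule.orthogonalProjectionOnto_apply_of_mem_orthogonal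
        (Submodule.le_orthogonal_orthogonal _ hk)
    simp [hP, Submodule.starProjection_apply]

theorem norm_apply_le_of_isPositive_sub {c m : E →L[𝕜] E}
    (h : (star c * c - star m * m).IsPositive) (x : E) : ‖m x‖ ≤ ‖c x‖ := by
  have hpos := h.inner_nonneg_left x
  have hsq : ‖m x‖ ^ 2 ≤ ‖c x‖ ^ 2 := by
    rw [apply_norm_sq_eq_inner_adjoint_left, apply_norm_sq_eq_inner_adjoint_left]
    rw [sub_apply, inner_sub_left, RCLike.nonneg_iff] at hpos
    simpa [star_eq_adjoint, sub_nonneg] using hpos.1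
  exact (pow_le_pow_iff_left₀ (norm_nonneg _) (norm_nonneg _) two_ne_zero).mp hsq

/-- With `c = cos θ` and `m = sin θ cos θ`, this produces `s = sin θ`: it is `m / c` on the
closure of the range of `c` and the identity on the kernel of `c`. -/
theorem exists_isSelfAdjoint_mul_self_eq_one_sub {c m : E →L[𝕜] E} (hc : IsSelfAdjoint c)
    (hm : IsSelfAdjoint m) (hcm : Commute c m) (hm2 : m * m = c * c - c * c * (c * c)) :
    ∃ s : E →L[𝕜] E, IsSelfAdjoint s ∧ s * s = 1 - c * c ∧ s * c = m ∧
      ∀ T : E →L[𝕜] E, Commute T c → Commute T m → Commute T s := by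
  have hpos : (star c * c - star m * m).IsPositive := by
    rw [hm.star_eq, hc.star_eq, hm2, sub_sub_cancel]
    simpa [mul_def, hc.adjoint_eq] using isPositive_adjoint_comp_self (c * c)
  have hmc := norm_apply_le_of_isPositive_sub hpos
  have hmker : ∀ k ∈ (c : E →ₗ[𝕜] E).ker, m k = 0 := fun k hk => by
    simpa [show c k = 0 from hk] using hmc k
  have comm_apply {a b : E →L[𝕜] E} (h : Commute a b) (x : E) : a (b x) = b (a x) :=
    congr($h.eq x)
  obtain ⟨s, hsc, hsker⟩ := exists_mul_eq_of_norm_apply_le hc hmc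
  have hsc' : ∀ x, s (c x) = m x := fun x => congr($hsc x)
  have hcomm : ∀ T, Commute T c → Commute T m → Commute T s := by
    intro T hTc hTm
    refine eq_of_eqOn_range_of_eqOn_ker hc (fun x => ?_) (fun k hk => ?_)
    · simp only [mul_apply_eq_comp, hsc']
      rw [comm_apply hTc, hsc']
      exact comm_apply hTm x
    · have hTk : T k ∈ (c : E →ₗ[𝕜] E).ker := by
        simp [LinearMap.mem_ker, ← comm_apply hTc, show c k = 0 from hk]
      simp [hsker k hk, hsker _ hTk]
  have hcs : Commute c s := hcomm c (Commute.refl c) hcm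
  have hsm : s * m = c - c * (c * c) := by
    refine eq_of_eqOn_range_of_eqOn_ker hc (fun x => ?_) (fun k hk => ?_)
    · simp only [mul_apply_eq_comp, ← comm_apply hcm, hsc']
      simpa [mul_apply_eq_comp] using congr($hm2 x)
    · simp [hmker k hk, show c k = 0 from hk]
  have hss : s * s = 1 - c * c := by
    refine eq_of_eqOn_range_of_eqOn_ker hc (fun x => ?_) (fun k hk => ?_)
    · simpa [mul_apply_eq_comp, hsc'] using congr($hsm x)
    · simp [hsker k hk, show c k = 0 from hk]
  have hsa : star s = s := by
    refine eq_of_eqOn_range_of_eqOn_ker hc (fun x => ?_) (fun k hk => ?_)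
    · have : star s * c = s * c := by
        rw [hsc, ← hc.star_eq, ← star_mul, hcs.eq, hsc, hm.star_eq]
      exact congr($this x)
    · have hinner : innerSL 𝕜 k ∘L s = innerSL 𝕜 k := by
        refine eq_of_eqOn_range_of_eqOn_ker hc (fun x => ?_) (fun k' hk' => ?_)
        · simp only [comp_apply, hsc', innerSL_apply_apply]
          rw [← hm.adjoint_eq, adjoint_inner_right, hmker k hk, ← hc.adjoint_eq,
            adjoint_inner_right, show c k = 0 from hk, inner_zero_left]
        · simp [hsker k' hk']
      rw [hsker k hk]
      refine ext_inner_right 𝕜 fun x => ?_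
      simpa [star_eq_adjoint, adjoint_inner_left] using congr($hinner x)
  exact ⟨s, hsa, hss, hsc, hcomm⟩

end ContinuousLinearMap

open Complex in
theorem exists_unitary_mul_self_eq {Z : H →L[ℂ] H} (hZ : Z ∈ unitary (H →L[ℂ] H)) :
    ∃ W ∈ unitary (H →L[ℂ] H), W * W = Z ∧
      ∀ T : H →L[ℂ] H, Commute T Z → Commute T (star Z) → Commute T W := by
  have hZZ := Unitary.star_mul_self_of_mem hZ
  have hZZ' := Unitary.mul_star_self_of_mem hZ
  -- writing `Z = exp (iθ)`, `a = cos² (θ/2)` and `m = sin (θ/2) cos (θ/2)`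
  set a : H →L[ℂ] H := (4 : ℝ)⁻¹ • (1 + 1 + Z + star Z) with ha
  set m : H →L[ℂ] H := (4 : ℝ)⁻¹ • (I • (star Z - Z)) with hm
  have ha0 : 0 ≤ a := by
    have : (1 + Z) * star (1 + Z) = 1 + 1 + Z + star Z := by
      rw [star_add, star_one, mul_add, add_mul, add_mul, hZZ', mul_one, one_mul, mul_one]
      abel
    rw [ha, ← this]
    exact smul_nonneg (by norm_num) (mul_star_self_nonneg _)
  have hma : ∀ T, Commute T Z → Commute T (star Z) → Commute T a ∧ Commute T m :=
    fun T h h' =>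
      ⟨((((Commute.one_right T).add_right (.one_right T)).add_right h).add_right h').smul_right _,
        ((h'.sub_right h).smul_right I).smul_right _⟩
  have hZZc : Commute Z (star Z) := commute_unitary_self_star hZ
  obtain ⟨c, hcsa, hcc, hcomm_c⟩ : ∃ c : H →L[ℂ] H, IsSelfAdjoint c ∧ c * c = a ∧
      ∀ T, Commute T a → Commute T c :=
    ⟨CFC.sqrt a, (CFC.sqrt_nonneg a).isSelfAdjoint, CFC.sqrt_mul_sqrt_self a,
      fun T h => (h.symm.cfcₙ_nnreal NNReal.sqrt).symm⟩
  have hmsa : IsSelfAdjoint m := by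
    simp only [IsSelfAdjoint, hm, smul_sub, star_sub, star_smul, star_trivial, RCLike.star_def,
      conj_I, star_star, neg_smul, smul_neg, sub_neg_eq_add]
    abel
  have hm2 : m * m = c * c - c * c * (c * c) := by
    rw [hcc, hm, ha]
    simp only [add_mul, mul_add, sub_mul, mul_sub, smul_mul_assoc, mul_smul_comm, hZZ, hZZ',
      mul_one, one_mul]
    match_scalars <;> simp [Complex.ext_iff] <;> norm_num
  have hcm : Commute c m := by
    refine (hcomm_c m (hma m ?_ ?_).1).symm
    exacts [(hma Z (.refl Z) hZZc).2.symm, (hma (star Z) hZZc.symm (.refl _)).2.symm]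
  obtain ⟨s, hssa, hss, hsc, hs⟩ := ContinuousLinearMap.exists_isSelfAdjoint_mul_self_eq_one_sub
    hcsa hmsa hcm hm2
  have hcs : c * s = m := by rw [(hs c (Commute.refl c) hcm).eq, hsc]
  have hstarW : star (c + I • s) = c - I • s := by
    simp [hcsa.star_eq, hssa.star_eq, star_smul, sub_eq_add_neg]
  refine ⟨c + I • s, ⟨?_, ?_⟩, ?_, fun T h h' => ?_⟩
  · rw [hstarW]
    simp only [mul_add, sub_mul, smul_mul_assoc, mul_smul_comm, hss, hsc, hcs, hcc]
    match_scalars <;> simp [Complex.ext_iff]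
  · rw [hstarW]
    simp only [add_mul, mul_sub, smul_mul_assoc, mul_smul_comm, hss, hsc, hcs, hcc]
    match_scalars <;> simp [Complex.ext_iff]
  · simp only [add_mul, mul_add, smul_mul_assoc, mul_smul_comm, hss, hsc, hcs, hcc, hm, ha]
    match_scalars <;> simp [Complex.ext_iff] <;> norm_num
  · obtain ⟨hTa, hTm⟩ := hma T h h'
    have hTc := hcomm_c T hTa
    exact hTc.add_right ((hs T hTc hTm).smul_right I)

theorem isStarProjection_half_one_add_add {R : Type*} [Ring R] [StarRing R] [Algebra ℝ R]
    [StarModule ℝ R] {b c : R} (hb : IsSelfAdjoint b) (hc : IsSelfAdjoint c)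
    (hcc : c * c = 1 - b * b) (hcb : c * b = -(b * c)) :
    IsStarProjection ((2⁻¹ : ℝ) • (1 + b + c)) := by
  refine ⟨?_, (IsSelfAdjoint.all _).smul (((IsSelfAdjoint.one R).add hb).add hc)⟩
  have : (1 + b + c) * (1 + b + c) = (2 : ℝ) • (1 + b + c) := by
    simp only [add_mul, mul_add, one_mul, mul_one, hcc, hcb]
    module
  rw [IsIdempotentElem, smul_mul_smul_comm, this, smul_smul]
  norm_num

theorem Commute.mul_self_left_of_mul_eq_neg {R : Type*} [Ring R] {a b : R}
    (h : a * b = -(b * a)) : Commute (a * a) b := by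
  rw [commute_iff_eq, mul_assoc, h, mul_neg, ← mul_assoc, h, neg_mul, neg_neg, mul_assoc]

namespace VonNeumannAlgebra

theorem mem_of_forall_commute {M : VonNeumannAlgebra H} {x : H →L[ℂ] H}
    (h : ∀ g ∈ M.commutant, Commute g x) : x ∈ M := by
  rw [← M.commutant_commutant, mem_commutant_iff]
  exact fun g hg => (h g hg).eq

theorem exists_isSelfAdjoint_mul_self_eq_one_of_mul_eq_neg (M : VonNeumannAlgebra H)
    {b u : H →L[ℂ] H} (hb : IsSelfAdjoint b) (hu : u ∈ unitary (H →L[ℂ] H))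
    (huM : u ∈ M) (hub : u * b = -(b * u)) :
    ∃ j ∈ M, IsSelfAdjoint j ∧ j * j = 1 ∧ j * b = -(b * j) := by
  obtain ⟨w, hw, hww, hcomm⟩ := exists_unitary_mul_self_eq (mul_mem hu hu)
  have hwM : w ∈ M := mem_of_forall_commute fun g hg =>
    hcomm g (mem_commutant_iff.mp hg _ (mul_mem huM huM)).symm
      (mem_commutant_iff.mp hg _ (star_mem (mul_mem huM huM))).symm
  have hwu : Commute (star w) u := by
    have hu' := commute_unitary_star_self hu
    simpa using (hcomm (star u) (hu'.mul_right hu') (by simp)).star_star.symm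
  have hbuu : Commute b (u * u) := (Commute.mul_self_left_of_mul_eq_neg hub).symm
  have hwb : Commute (star w) b := by
    have hbuu' : Commute b (star (u * u)) := by simpa [hb.star_eq] using hbuu.star_star
    simpa [hb.star_eq] using (hcomm b hbuu hbuu').symm.star_star
  have hjj : star w * u * (star w * u) = 1 := by
    rw [mul_assoc, ← mul_assoc u, ← hwu.eq, mul_assoc, ← mul_assoc, ← star_mul, hww,
      Unitary.star_mul_self_of_mem (mul_mem hu hu)]
  have hj : star (star w * u) * (star w * u) = 1 := by
    rw [star_mul, star_star, mul_assoc, ← mul_assoc w, Unitary.mul_star_self_of_mem hw, one_mul,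
      Unitary.star_mul_self_of_mem hu]
  refine ⟨star w * u, mul_mem (star_mem hwM) huM, ?_, hjj, ?_⟩
  · calc star (star w * u) = star (star w * u) * (star w * u * (star w * u)) := by
          rw [hjj, mul_one]
      _ = star w * u := by rw [← mul_assoc, hj, one_mul]
  · rw [mul_assoc, hub, mul_neg, ← mul_assoc, hwb.eq, mul_assoc]

theorem exists_isSelfAdjoint_mul_self_eq_one_sub_mul_self (M : VonNeumannAlgebra H)
    {b u : H →L[ℂ] H} (hbM : b ∈ M) (hb : IsSelfAdjoint b) (hb1 : 0 ≤ 1 - b * b)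
    (hu : u ∈ unitary (H →L[ℂ] H)) (huM : u ∈ M) (hub : u * b = -(b * u)) :
    ∃ c ∈ M, IsSelfAdjoint c ∧ c * c = 1 - b * b ∧ c * b = -(b * c) := by
  obtain ⟨j, hjM, hj, hjj, hjb⟩ :=
    M.exists_isSelfAdjoint_mul_self_eq_one_of_mul_eq_neg hb hu huM hub
  obtain ⟨d, hd, hdd, hcomm⟩ : ∃ d : H →L[ℂ] H, IsSelfAdjoint d ∧ d * d = 1 - b * b ∧
      ∀ T, Commute T (1 - b * b) → Commute T d :=
    ⟨CFC.sqrt (1 - b * b), (CFC.sqrt_nonneg _).isSelfAdjoint, CFC.sqrt_mul_sqrt_self _ hb1,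
      fun T h => (h.symm.cfcₙ_nnreal NNReal.sqrt).symm⟩
  have hjd : Commute j d :=
    hcomm j ((Commute.one_right j).sub_right
      (Commute.mul_self_left_of_mul_eq_neg (show b * j = -(j * b) by rw [hjb, neg_neg])).symm)
  have hbd : Commute b d :=
    hcomm b ((Commute.one_right b).sub_right ((Commute.refl b).mul_right (Commute.refl b)))
  have hdM : d ∈ M := mem_of_forall_commute fun g hg =>
    hcomm g (mem_commutant_iff.mp hg _ (sub_mem (one_mem M) (mul_mem hbM hbM))).symm
  refine ⟨j * d, mul_mem hjM hdM, (hj.commute_iff hd).mp hjd, ?_, ?_⟩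
  · rw [mul_assoc, ← mul_assoc d, ← hjd.eq, mul_assoc, ← mul_assoc, hjj, one_mul, hdd]
  · rw [mul_assoc, ← hbd.eq, ← mul_assoc, hjb, neg_mul, mul_assoc]

theorem exists_isProjectionOp_add_eq (M : VonNeumannAlgebra H) {b c : H →L[ℂ] H} (hbM : b ∈ M)
    (hcM : c ∈ M) (hb : IsSelfAdjoint b) (hc : IsSelfAdjoint c) (hcc : c * c = 1 - b * b)
    (hcb : c * b = -(b * c)) :
    ∃ P Q : H →L[ℂ] H, P ∈ M ∧ Q ∈ M ∧ IsProjectionOp P ∧ IsProjectionOp Q ∧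
      1 + b = P + Q := by
  have hproj {x : H →L[ℂ] H} (hx : IsSelfAdjoint x) (hxx : x * x = 1 - b * b)
      (hxb : x * b = -(b * x)) : IsProjectionOp ((2⁻¹ : ℝ) • (1 + b + x)) :=
    have h := isStarProjection_half_one_add_add hb hx hxx hxb
    ⟨h.isSelfAdjoint, h.isIdempotentElem⟩
  have hmem {x : H →L[ℂ] H} (hx : x ∈ M) : (2⁻¹ : ℝ) • (1 + b + x) ∈ M := by
    rw [RCLike.real_smul_eq_coe_smul (K := ℂ)]
    exact M.toStarSubalgebra.smul_mem (add_mem (add_mem (one_mem M) hbM) hx) _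
  refine ⟨_, _, hmem hcM, hmem (neg_mem hcM), hproj hc hcc hcb,
    hproj hc.neg (by rw [neg_mul_neg, hcc]) (by rw [neg_mul, hcb, mul_neg]), by module⟩

end VonNeumannAlgebra

theorem stmt_11_general (M : VonNeumannAlgebra H) (A : H →L[ℂ] H) (hAM : A ∈ M)
    (hA0 : A.IsPositive) (hA2 : ((2 : ℂ) • (1 : H →L[ℂ] H) - A).IsPositive)
    (U : H →L[ℂ] H) (hUM : U ∈ M) (hU1 : star U * U = 1) (hU2 : U * star U = 1)
    (hUAU : U * A * star U = (2 : ℂ) • (1 : H →L[ℂ] H) - A) :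
    ∃ P Q : H →L[ℂ] H, P ∈ M ∧ Q ∈ M ∧ IsProjectionOp P ∧ IsProjectionOp Q ∧
      A = P + Q := by
  have hBM : A - 1 ∈ M := sub_mem hAM (one_mem M)
  have hB : IsSelfAdjoint (A - 1) := hA0.isSelfAdjoint.sub (.one _)
  have hUA : U * A = ((2 : ℂ) • 1 - A) * U := by
    rw [← hUAU]
    simp only [mul_assoc, hU1, mul_one]
  have hUB : U * (A - 1) = -((A - 1) * U) := by
    rw [mul_sub, hUA, mul_one, sub_mul, sub_mul, smul_mul_assoc, one_mul]
    module
  have hB1 : 0 ≤ 1 - (A - 1) * (A - 1) := by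
    have : 1 - (A - 1) * (A - 1) = A * ((2 : ℂ) • 1 - A) := by
      simp only [mul_sub, sub_mul, mul_smul_comm, mul_one, one_mul]
      module
    rw [this]
    exact Commute.mul_nonneg ((ContinuousLinearMap.nonneg_iff_isPositive _).mpr hA0)
      ((ContinuousLinearMap.nonneg_iff_isPositive _).mpr hA2)
      (((Commute.one_right A).smul_right _).sub_right (.refl A))
  obtain ⟨C, hCM, hC, hCC, hCB⟩ :=
    M.exists_isSelfAdjoint_mul_self_eq_one_sub_mul_self hBM hB hB1 ⟨hU1, hU2⟩ hUM hUB
  simpa using M.exists_isProjectionOp_add_eq hBM hCM hB hC hCC hCB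

/-- Proposition 2.10 (sufficiency): let `M` be a von Neumann algebra, `A ∈ M` with
`0 ≤ A ≤ 2I` and dense range, and suppose there is a unitary `U ∈ M` with
`U A U* = 2I - A`.  Then `A` is the sum of two projections in `M`. -/
theorem stmt_11 (M : VonNeumannAlgebra H) (A : H →L[ℂ] H) (hAM : A ∈ M)
    (hA0 : A.IsPositive) (hA2 : ((2 : ℂ) • (1 : H →L[ℂ] H) - A).IsPositive)
    (hrange : Dense (Set.range A))
    (U : H →L[ℂ] H) (hUM : U ∈ M) (hU1 : star U * U = 1) (hU2 : U * star U = 1)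
    (hUAU : U * A * star U = (2 : ℂ) • (1 : H →L[ℂ] H) - A) :
    ∃ P Q : H →L[ℂ] H, P ∈ M ∧ Q ∈ M ∧ IsProjectionOp P ∧ IsProjectionOp Q ∧
      A = P + Q :=
  stmt_11_general M A hAM hA0 hA2 U hUM hU1 hU2 hUAU
end

section
/- Conversely: if A ∈ B(H)⁺, V is a partial isometry with V*V = R_A, and I = Σ_{j=1}^N E_j is a decomposition of the identity into mutually orthogonal nonzero projections with Σ_j E_j V A V* E_j = I (strong convergence if N = ∞), then setting W_j := E_j V A^{1/2} and P_j := W_j* W_j, each P_j is a projection equivalent to E_j and A = Σ_{j=1}^N P_j in the strong operator topology. -/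
/-!
Since `S* = S`, `W_j W_j* = E_j (V A V*) E_j`, and the diagonal condition, compressed by `E_j`,
gives `E_j (V A V*) E_j = E_j`. Hence `W_j W_j* W_j = W_j`, so `W_j` is a partial isometry and
`P_j = W_j* W_j` is a projection equivalent to `E_j`. Summing, `Σ_j P_j = S V* (Σ_j E_j) V S
= S V* V S = S R_A S = A`, because the range of `S` lies in the closure of the range of `S S* = A`.
-/

open scoped InnerProductSpace

variable {H : Type*} [NormedAddCommGroup H] [InnerProductSpace ℂ H] [CompleteSpace H]

/-- Murray–von Neumann equivalence of projections in `B(H)`. -/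
def MvNEquivOp (P Q : H →L[ℂ] H) : Prop := ∃ W : H →L[ℂ] H, star W * W = P ∧ W * star W = Q

/-- The range projection of an operator: the orthogonal projection onto the closure of
its range. -/
noncomputable def rangeProj (A : H →L[ℂ] H) : H →L[ℂ] H :=
  ((LinearMap.range (A : H →ₗ[ℂ] H)).topologicalClosure).subtypeL.comp
    (Submodule.orthogonalProjectionOnto ((LinearMap.range (A : H →ₗ[ℂ] H)).topologicalClosure))

theorem isStarProjection_star_mul_self_of_mul_star_mul_self {R : Type*} [Semiring R] [StarRing R]
    {W : R} (hW : W * star W * W = W) : IsStarProjection (star W * W) where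
  isIdempotentElem := by
    rw [IsIdempotentElem, mul_assoc, ← mul_assoc W, hW]
  isSelfAdjoint := IsSelfAdjoint.star_mul_self W

theorem ContinuousLinearMap.mul_mul_eq_of_hasSum_diagonal {ι R M : Type*} [Semiring R]
    [TopologicalSpace M] [AddCommMonoid M] [Module R M] [T2Space M] [ContinuousAdd M]
    {E : ι → M →L[R] M} (hE : ∀ j, E j * E j = E j) (horth : ∀ i j, i ≠ j → E i * E j = 0)
    {T : M →L[R] M} (hT : ∀ x, HasSum (fun j => E j (T (E j x))) x) (j : ι) :
    E j * T * E j = E j := by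
  ext x
  have hcompress : HasSum (fun k => E j (E k (T (E k x)))) (E j (E j (T (E j x)))) :=
    hasSum_single j fun k hk => by
      simpa using congr($(horth j k (Ne.symm hk)) (T (E k x)))
  calc (E j * T * E j) x = (E j * E j) (T (E j x)) := by rw [hE j]; rfl
    _ = E j x := hcompress.unique ((hT x).mapL (E j))

namespace ContinuousLinearMap

variable {𝕜 E : Type*} [RCLike 𝕜] [NormedAddCommGroup E] [InnerProductSpace 𝕜 E]
  [CompleteSpace E]

theorem topologicalClosure_range_comp_adjoint (T : E →L[𝕜] E) :
    (T ∘L adjoint T).range.topologicalClosure = T.range.topologicalClosure := by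
  have h := orthogonal_ker (T ∘L adjoint T)
  rw [adjoint_comp, adjoint_adjoint, ker_self_comp_adjoint, orthogonal_ker, adjoint_adjoint] at h
  exact h.symm

end ContinuousLinearMap

theorem rangeProj_apply_of_mem {A : H →L[ℂ] H} {x : H}
    (hx : x ∈ (LinearMap.range (A : H →ₗ[ℂ] H)).topologicalClosure) : rangeProj A x = x :=
  Submodule.starProjection_eq_self_iff.mpr hx

theorem rangeProj_mul_star_self_mul (T : H →L[ℂ] H) : rangeProj (T * star T) * T = T := by
  ext x
  apply rangeProj_apply_of_mem
  rw [ContinuousLinearMap.star_eq_adjoint, ContinuousLinearMap.mul_def,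
    ContinuousLinearMap.topologicalClosure_range_comp_adjoint]
  exact Submodule.le_topologicalClosure _ ⟨x, rfl⟩

theorem stmt_13_general {ι : Type*}
    (A : H →L[ℂ] H)
    (S : H →L[ℂ] H) (hS : S.IsPositive) (hS2 : S * S = A)
    (V : H →L[ℂ] H) (hV : star V * V = rangeProj A)
    (E : ι → (H →L[ℂ] H)) (hE : ∀ j, IsProjectionOp (E j))
    (horth : ∀ i j, i ≠ j → E i * E j = 0)
    (hEsum : ∀ x : H, HasSum (fun j => E j x) x)
    (hdiag : ∀ x : H, HasSum (fun j => E j ((V * A * star V) (E j x))) x) :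
    (∀ j, IsProjectionOp (star (E j * V * S) * (E j * V * S)) ∧
      MvNEquivOp (star (E j * V * S) * (E j * V * S)) (E j)) ∧
    (∀ x : H, HasSum (fun j => (star (E j * V * S) * (E j * V * S)) x) (A x)) := by
  have hSstar : star S = S := hS.isSelfAdjoint.star_eq
  have hEidem j : E j * E j = E j := (hE j).2
  have hVVS : star V * V * S = S := by
    have h := rangeProj_mul_star_self_mul S
    rwa [hSstar, hS2, ← hV] at h
  have hstarW j : star (E j * V * S) = S * star V * E j := by
    simp only [star_mul, hSstar, (hE j).1.star_eq, mul_assoc]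
  have hWWstar j : E j * V * S * star (E j * V * S) = E j :=
    calc E j * V * S * star (E j * V * S) = E j * (V * (S * S) * star V) * E j := by
          rw [hstarW]; noncomm_ring
      _ = E j := by
          rw [hS2, ContinuousLinearMap.mul_mul_eq_of_hasSum_diagonal hEidem horth hdiag j]
  have hP j : star (E j * V * S) * (E j * V * S) = S * star V * E j * V * S :=
    calc star (E j * V * S) * (E j * V * S) = S * star V * (E j * E j) * V * S := by
          rw [hstarW]; noncomm_ring
      _ = S * star V * E j * V * S := by rw [hEidem]
  refine ⟨fun j => ⟨?_, E j * V * S, rfl, hWWstar j⟩, fun x => ?_⟩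
  · have hW : E j * V * S * star (E j * V * S) * (E j * V * S) = E j * V * S := by
      rw [hWWstar, ← mul_assoc, ← mul_assoc, hEidem]
    have hproj := isStarProjection_star_mul_self_of_mul_star_mul_self hW
    exact ⟨hproj.isSelfAdjoint, hproj.isIdempotentElem⟩
  · have hAx : (S * star V) (V (S x)) = A x := by
      change (S * (star V * V * S)) x = A x
      rw [hVVS, hS2]
    rw [← hAx]
    convert (hEsum (V (S x))).mapL (S * star V) using 2 with j
    rw [hP]
    rfl

/-- Proposition 3.1, (i) ⇒ (ii): if `V` is a partial isometry with `V*V = R_A`, and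
`I = Σ_j E_j` is a decomposition of the identity into mutually orthogonal nonzero
projections with `Σ_j E_j V A V* E_j = I` strongly, then, with `S = A^{1/2}` (the
positive square root of `A`) and `W_j := E_j V S`, each `P_j := W_j* W_j` is a
projection equivalent to `E_j` and `A = Σ_j P_j` strongly. -/
theorem stmt_13 {ι : Type*} [Countable ι]
    (A : H →L[ℂ] H) (hA : A.IsPositive)
    (S : H →L[ℂ] H) (hS : S.IsPositive) (hS2 : S * S = A)
    (V : H →L[ℂ] H) (hV : star V * V = rangeProj A)
    (E : ι → (H →L[ℂ] H)) (hE : ∀ j, IsProjectionOp (E j)) (hEne : ∀ j, E j ≠ 0)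
    (horth : ∀ i j, i ≠ j → E i * E j = 0)
    (hEsum : ∀ x : H, HasSum (fun j => E j x) x)
    (hdiag : ∀ x : H, HasSum (fun j => E j ((V * A * star V) (E j x))) x) :
    (∀ j, IsProjectionOp (star (E j * V * S) * (E j * V * S)) ∧
      MvNEquivOp (star (E j * V * S) * (E j * V * S)) (E j)) ∧
    (∀ x : H, HasSum (fun j => (star (E j * V * S) * (E j * V * S)) x) (A x)) :=
  stmt_13_general A S hS hS2 V hV E hE horth hEsum hdiag
end

section
/- Let (g₀, g₁, g₂, …) be mutually orthogonal unit vectors in H, let μ_j > 0 with λ := Σ_{j=1}^∞ μ_j ≤ 1, and let A := (1-λ)(g₀⊗g₀) + Σ_{j=1}^∞ (1+μ_j)(g_j⊗g_j) (converging strongly). Then A is a strong sum of rank-one projections: there exist rank-one projections P_j with A = Σ_{j=1}^∞ P_j in the strong operator topology. -/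
/-!
Peel off one rank-one projection at a time. With `w n = 1 - λ + μ₀ + ⋯ + μₙ₋₁`, the remainder
after `n` steps is `w n • vₙ ⊗ vₙ + ∑_{j ≥ n} (1 + μⱼ) gⱼ₊₁ ⊗ gⱼ₊₁` for a unit vector `vₙ` in the
span of `g₀, …, gₙ`. The positive block `w n • vₙ ⊗ vₙ + (1 + μₙ) gₙ₊₁ ⊗ gₙ₊₁` has trace
`1 + w (n + 1)`, and an explicit `2 × 2` computation writes it as
`xₙ ⊗ xₙ + w (n + 1) • vₙ₊₁ ⊗ vₙ₊₁` with unit vectors `xₙ, vₙ₊₁`. Each step multiplies the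
`gₘ`-coordinate of `vₙ` by a factor whose square is at most `1 / (1 + μₙ / (1 - w n))`; since
`∑ μₙ / (1 - w n) = ∞` (Abel–Dini), `vₙ → 0` weakly and the remainders tend to `0` strongly.
As all summands are positive, the convergence of the partial sums is unconditional.
-/

open Filter Finset Topology
open scoped InnerProductSpace

section Hilbert

open RCLike
open scoped ComplexConjugate

variable {𝕜 E : Type*} [RCLike 𝕜] [NormedAddCommGroup E] [InnerProductSpace 𝕜 E]

theorem re_inner_inner_smul_self (u x : E) : re ⟪⟪u, x⟫_𝕜 • u, x⟫_𝕜 = ‖⟪u, x⟫_𝕜‖ ^ 2 := by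
  rw [inner_smul_left, RCLike.conj_mul, ← ofReal_pow, ofReal_re]

theorem hasSum_norm_inner_sq_of_tendsto {u : ℕ → E} {T : E →L[𝕜] E}
    (hT : ∀ x, Tendsto (fun n => ∑ j ∈ range n, ⟪u j, x⟫_𝕜 • u j) atTop (𝓝 (T x))) (x : E) :
    HasSum (fun j => ‖⟪u j, x⟫_𝕜‖ ^ 2) (re ⟪T x, x⟫_𝕜) := by
  rw [hasSum_iff_tendsto_nat_of_nonneg (fun _ => by positivity)]
  have h := ((@RCLike.continuous_re 𝕜 _).tendsto _).comp
    ((hT x).inner (tendsto_const_nhds (x := x)))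
  simpa [Function.comp_def, sum_inner, re_inner_inner_smul_self] using h

theorem norm_sum_inner_smul_sq_le {u : ℕ → E} {T : E →L[𝕜] E}
    (hT : ∀ x, Tendsto (fun n => ∑ j ∈ range n, ⟪u j, x⟫_𝕜 • u j) atTop (𝓝 (T x)))
    (s : Finset ℕ) (x : E) :
    ‖∑ j ∈ s, ⟪u j, x⟫_𝕜 • u j‖ ^ 2 ≤ ‖T‖ * ∑ j ∈ s, ‖⟪u j, x⟫_𝕜‖ ^ 2 := by
  set y := ∑ j ∈ s, ⟪u j, x⟫_𝕜 • u j
  have hy : ‖y‖ ^ 2 ≤ ∑ j ∈ s, ‖⟪u j, x⟫_𝕜‖ * ‖⟪u j, y⟫_𝕜‖ :=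
    calc ‖y‖ ^ 2 = re ⟪y, y⟫_𝕜 := norm_sq_eq_re_inner y
      _ = re (∑ j ∈ s, conj ⟪u j, x⟫_𝕜 * ⟪u j, y⟫_𝕜) := by
        simp only [y, sum_inner, inner_smul_left]
      _ ≤ ‖∑ j ∈ s, conj ⟪u j, x⟫_𝕜 * ⟪u j, y⟫_𝕜‖ := RCLike.re_le_norm _
      _ ≤ ∑ j ∈ s, ‖⟪u j, x⟫_𝕜‖ * ‖⟪u j, y⟫_𝕜‖ := by
        simpa only [norm_mul, norm_conj] using norm_sum_le s fun j => conj ⟪u j, x⟫_𝕜 * ⟪u j, y⟫_𝕜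
  have hTy : ∑ j ∈ s, ‖⟪u j, y⟫_𝕜‖ ^ 2 ≤ ‖T‖ * ‖y‖ ^ 2 :=
    calc ∑ j ∈ s, ‖⟪u j, y⟫_𝕜‖ ^ 2 ≤ re ⟪T y, y⟫_𝕜 :=
          sum_le_hasSum s (fun _ _ => by positivity) (hasSum_norm_inner_sq_of_tendsto hT y)
      _ ≤ ‖T y‖ * ‖y‖ := re_inner_le_norm _ _
      _ ≤ ‖T‖ * ‖y‖ * ‖y‖ := by gcongr; exact T.le_opNorm y
      _ = ‖T‖ * ‖y‖ ^ 2 := by ring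
  have hCS := sum_mul_sq_le_sq_mul_sq s (fun j => ‖⟪u j, x⟫_𝕜‖) (fun j => ‖⟪u j, y⟫_𝕜‖)
  rcases (norm_nonneg y).eq_or_lt with hy0 | hy0
  · rw [← hy0, zero_pow two_ne_zero]
    positivity
  · have : ‖y‖ ^ 2 * ‖y‖ ^ 2 ≤ (‖T‖ * ∑ j ∈ s, ‖⟪u j, x⟫_𝕜‖ ^ 2) * ‖y‖ ^ 2 := by
      calc ‖y‖ ^ 2 * ‖y‖ ^ 2 = (‖y‖ ^ 2) ^ 2 := by ring
        _ ≤ (∑ j ∈ s, ‖⟪u j, x⟫_𝕜‖ * ‖⟪u j, y⟫_𝕜‖) ^ 2 := by gcongr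
        _ ≤ (∑ j ∈ s, ‖⟪u j, x⟫_𝕜‖ ^ 2) * (‖T‖ * ‖y‖ ^ 2) := hCS.trans (by gcongr)
        _ = _ := by ring
    exact le_of_mul_le_mul_right this (by positivity)

theorem hasSum_inner_smul_of_tendsto [CompleteSpace E] {u : ℕ → E} {T : E →L[𝕜] E}
    (hT : ∀ x, Tendsto (fun n => ∑ j ∈ range n, ⟪u j, x⟫_𝕜 • u j) atTop (𝓝 (T x))) (x : E) :
    HasSum (fun j => ⟪u j, x⟫_𝕜 • u j) (T x) := by
  have hsq := hasSum_norm_inner_sq_of_tendsto hT x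
  have hsummable : Summable (fun j => ⟪u j, x⟫_𝕜 • u j) := by
    refine summable_iff_vanishing_norm.2 fun ε hε => ?_
    obtain ⟨s, hs⟩ := summable_iff_vanishing_norm.1 hsq.summable (ε ^ 2 / (‖T‖ + 1)) (by positivity)
    refine ⟨s, fun t ht => lt_of_pow_lt_pow_left₀ 2 hε.le ?_⟩
    have hst := hs t ht
    rw [Real.norm_of_nonneg (by positivity)] at hst
    calc ‖∑ j ∈ t, ⟪u j, x⟫_𝕜 • u j‖ ^ 2 ≤ ‖T‖ * ∑ j ∈ t, ‖⟪u j, x⟫_𝕜‖ ^ 2 :=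
          norm_sum_inner_smul_sq_le hT t x
      _ ≤ (‖T‖ + 1) * ∑ j ∈ t, ‖⟪u j, x⟫_𝕜‖ ^ 2 := by gcongr; linarith
      _ < (‖T‖ + 1) * (ε ^ 2 / (‖T‖ + 1)) := by gcongr
      _ = ε ^ 2 := by field_simp
  convert hsummable.hasSum
  exact tendsto_nhds_unique (hT x) hsummable.hasSum.tendsto_sum_nat

theorem tendsto_inner_zero_of_mem_span [CompleteSpace E] {ι : Type*} {l : Filter ι} {v : ι → E}
    {C : ℝ} {s : Set E} (hv : ∀ i, ‖v i‖ ≤ C) (hvs : ∀ i, v i ∈ Submodule.span 𝕜 s)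
    (hs : ∀ y ∈ s, Tendsto (fun i => ⟪v i, y⟫_𝕜) l (𝓝 0)) (x : E) :
    Tendsto (fun i => ⟪v i, x⟫_𝕜) l (𝓝 0) := by
  set K := Submodule.span 𝕜 s
  have hK : ∀ y ∈ K, Tendsto (fun i => ⟪v i, y⟫_𝕜) l (𝓝 0) := by
    intro y hy
    induction hy using Submodule.span_induction with
    | mem y hy => exact hs y hy
    | zero => simpa using tendsto_const_nhds
    | add y z _ _ hy hz => simpa [inner_add_right] using hy.add hz
    | smul a y _ hy => simpa [inner_smul_right] using hy.const_mul a
  have hequi : Equicontinuous fun i => ⇑(innerSL 𝕜 (v i)) := by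
    have := (NormedSpace.equicontinuous_TFAE fun i => innerSL 𝕜 (v i)).out 5 1
    exact this.1 ⟨C, fun i => (innerSL_apply_norm 𝕜 (v i)).trans_le (hv i)⟩
  obtain ⟨y, hy, z, hz, rfl⟩ : ∃ y ∈ Kᗮᗮ, ∃ z ∈ Kᗮ, y + z = x := by
    rw [← Submodule.mem_sup, sup_comm, Submodule.sup_orthogonal_of_hasOrthogonalProjection]
    trivial
  rw [Submodule.orthogonal_orthogonal_eq_closure] at hy
  have hy' : Tendsto (fun i => ⟪v i, y⟫_𝕜) l (𝓝 0) :=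
    (hequi y).tendsto_of_mem_closure (f := fun _ => 0) tendsto_const_nhds hK
      (by rwa [← Submodule.topologicalClosure_coe])
  simpa [inner_add_right, Submodule.inner_right_of_mem_orthogonal (hvs _) hz] using hy'

end Hilbert

theorem tendsto_sum_range_div_one_sub_atTop {w : ℕ → ℝ} (hmono : Monotone w)
    (hlt : ∀ n, w n < 1) (hlim : Tendsto w atTop (𝓝 1)) :
    Tendsto (fun n => ∑ k ∈ range n, (w (k + 1) - w k) / (1 - w k)) atTop atTop := by
  set f := fun k => (w (k + 1) - w k) / (1 - w k)
  have hf : ∀ k, 0 ≤ f k := fun k =>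
    div_nonneg (sub_nonneg.2 (hmono k.le_succ)) (sub_nonneg.2 (hlt k).le)
  rw [← not_summable_iff_tendsto_nat_atTop_of_nonneg hf]
  intro hsum
  -- every tail of the series is at least `1`, since `1 - w` decreases along it
  have htail : ∀ m, 1 ≤ ∑' k, f (k + m) := by
    intro m
    have hm : 0 < 1 - w m := sub_pos.2 (hlt m)
    have hpartial : ∀ N, (w (N + m) - w m) / (1 - w m) ≤ ∑' k, f (k + m) := by
      intro N
      refine le_trans ?_ (((summable_nat_add_iff m).2 hsum).sum_le_tsum (range N)
        fun k _ => hf _)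
      have htel : ∑ k ∈ range N, (w (k + m + 1) - w (k + m)) = w (N + m) - w m := by
        simpa [add_right_comm] using sum_range_sub (fun k => w (k + m)) N
      simp only [f]
      rw [← htel, sum_div]
      gcongr with k
      · exact sub_nonneg.2 (hmono (k + m).le_succ)
      · exact sub_pos.2 (hlt _)
      · exact hmono (Nat.le_add_left m k)
    have hconv : Tendsto (fun N => (w (N + m) - w m) / (1 - w m)) atTop
        (𝓝 ((1 - w m) / (1 - w m))) :=
      ((hlim.comp (tendsto_add_atTop_nat m)).sub_const _).div_const _
    rw [div_self hm.ne'] at hconv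
    exact le_of_tendsto' hconv hpartial
  obtain ⟨m, hm⟩ := ((tendsto_sum_nat_add f).eventually (gt_mem_nhds one_pos)).exists
  exact (htail m).not_gt hm

theorem tendsto_zero_of_mul_one_add_le {s r : ℕ → ℝ} (hs : ∀ n, 0 ≤ s n) (hr : ∀ n, 0 ≤ r n)
    (hstep : ∀ n, s (n + 1) * (1 + r n) ≤ s n)
    (hdiv : Tendsto (fun n => ∑ k ∈ range n, r k) atTop atTop) :
    Tendsto s atTop (𝓝 0) := by
  have hanti : ∀ n, s (n + 1) ≤ s n := fun n =>
    (le_mul_of_one_le_right (hs _) (by linarith [hr n])).trans (hstep n)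
  have hbound : ∀ n, s n * (1 + ∑ k ∈ range n, r k) ≤ s 0 := by
    intro n
    induction n with
    | zero => simp
    | succ n ih =>
      have hR : 0 ≤ ∑ k ∈ range n, r k := sum_nonneg fun k _ => hr k
      rw [sum_range_succ]
      nlinarith [hstep n, mul_le_mul_of_nonneg_right (hanti n) hR]
  refine squeeze_zero hs (fun n => (le_div_iff₀ ?_).2 (hbound n)) ?_
  · exact add_pos_of_pos_of_nonneg one_pos (sum_nonneg fun k _ => hr k)
  exact tendsto_const_nhds.div_atTop (tendsto_atTop_add_const_left _ 1 hdiv)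

section Split

variable (a c : ℝ)

/- For `0 ≤ a ≤ c`, `0 < c` and `a < 1`, `diag (a, 1 + c - a) = x xᵀ + c • y yᵀ` with the unit
vectors `x = (headFst a c, headSnd a c)` and `y = (restFst a c, restSnd a c)`; up to signs these
are forced by `det (diag (a, 1 + c - a) - c • y yᵀ) = 0`. -/
noncomputable def headFst : ℝ := √(a * (c - a) / (1 + c - 2 * a))
noncomputable def headSnd : ℝ := √((1 + c - a) * (1 - a) / (1 + c - 2 * a))
noncomputable def restFst : ℝ := √(a * (1 - a) / (c * (1 + c - 2 * a)))
noncomputable def restSnd : ℝ := -√((1 + c - a) * (c - a) / (c * (1 + c - 2 * a)))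

variable {a c}

theorem headFst_sq (ha : 0 ≤ a) (hac : a ≤ c) (ha1 : a < 1) :
    headFst a c ^ 2 = a * (c - a) / (1 + c - 2 * a) :=
  Real.sq_sqrt (div_nonneg (mul_nonneg ha (by linarith)) (by linarith))

theorem headSnd_sq (hac : a ≤ c) (ha1 : a < 1) :
    headSnd a c ^ 2 = (1 + c - a) * (1 - a) / (1 + c - 2 * a) :=
  Real.sq_sqrt (div_nonneg (mul_nonneg (by linarith) (by linarith)) (by linarith))

theorem restFst_sq (ha : 0 ≤ a) (hac : a ≤ c) (hc : 0 < c) (ha1 : a < 1) :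
    restFst a c ^ 2 = a * (1 - a) / (c * (1 + c - 2 * a)) :=
  Real.sq_sqrt (div_nonneg (mul_nonneg ha (by linarith)) (mul_nonneg hc.le (by linarith)))

theorem restSnd_sq (hac : a ≤ c) (hc : 0 < c) (ha1 : a < 1) :
    restSnd a c ^ 2 = (1 + c - a) * (c - a) / (c * (1 + c - 2 * a)) := by
  rw [restSnd, neg_sq]
  exact Real.sq_sqrt (div_nonneg (mul_nonneg (by linarith) (by linarith))
    (mul_nonneg hc.le (by linarith)))

theorem restFst_sq_add_restSnd_sq (ha : 0 ≤ a) (hac : a ≤ c) (hc : 0 < c) (ha1 : a < 1) :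
    restFst a c ^ 2 + restSnd a c ^ 2 = 1 := by
  rw [restFst_sq ha hac hc ha1, restSnd_sq hac hc ha1, ← add_div,
    div_eq_one_iff_eq (mul_pos hc (by linarith)).ne']
  ring

theorem headFst_sq_add_mul_restFst_sq (ha : 0 ≤ a) (hac : a ≤ c) (hc : 0 < c) (ha1 : a < 1) :
    headFst a c ^ 2 + c * restFst a c ^ 2 = a := by
  rw [headFst_sq ha hac ha1, restFst_sq ha hac hc ha1, mul_div_assoc',
    mul_div_mul_left _ _ hc.ne', ← add_div, div_eq_iff (by linarith)]
  ring

theorem headSnd_sq_add_mul_restSnd_sq (hac : a ≤ c) (hc : 0 < c) (ha1 : a < 1) :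
    headSnd a c ^ 2 + c * restSnd a c ^ 2 = 1 + c - a := by
  rw [headSnd_sq hac ha1, restSnd_sq hac hc ha1, mul_div_assoc',
    mul_div_mul_left _ _ hc.ne', ← add_div, div_eq_iff (by linarith)]
  ring

theorem headFst_sq_add_headSnd_sq (ha : 0 ≤ a) (hac : a ≤ c) (hc : 0 < c) (ha1 : a < 1) :
    headFst a c ^ 2 + headSnd a c ^ 2 = 1 := by
  linear_combination headFst_sq_add_mul_restFst_sq ha hac hc ha1 +
    headSnd_sq_add_mul_restSnd_sq hac hc ha1 - c * restFst_sq_add_restSnd_sq ha hac hc ha1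

theorem headFst_mul_headSnd_add_mul (ha : 0 ≤ a) (hac : a ≤ c) (hc : 0 < c) (ha1 : a < 1) :
    headFst a c * headSnd a c + c * (restFst a c * restSnd a c) = 0 := by
  have hsq : (headFst a c * headSnd a c) ^ 2 = (-(c * (restFst a c * restSnd a c))) ^ 2 := by
    rw [mul_pow, neg_sq, mul_pow, mul_pow, headFst_sq ha hac ha1, headSnd_sq hac ha1,
      restFst_sq ha hac hc ha1, restSnd_sq hac hc ha1]
    field_simp
  have hpq : 0 ≤ headFst a c * headSnd a c := mul_nonneg (Real.sqrt_nonneg _) (Real.sqrt_nonneg _)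
  have hrs : restFst a c * restSnd a c ≤ 0 :=
    mul_nonpos_of_nonneg_of_nonpos (Real.sqrt_nonneg _) (neg_nonpos.2 (Real.sqrt_nonneg _))
  rw [sq_eq_sq₀ hpq (neg_nonneg.2 (mul_nonpos_of_nonneg_of_nonpos hc.le hrs))] at hsq
  linarith

theorem restFst_sq_mul_one_add_le (ha : 0 ≤ a) (hac : a ≤ c) (hc : 0 < c) (ha1 : a < 1) :
    restFst a c ^ 2 * (1 + (c - a) / (1 - a)) ≤ 1 := by
  have hD : 0 < 1 + c - 2 * a := by linarith
  have h1 : 0 < 1 - a := by linarith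
  have : 1 + (c - a) / (1 - a) = (1 + c - 2 * a) / (1 - a) := by
    field_simp
    ring
  rw [restFst_sq ha hac hc ha1, this, div_mul_div_comm, div_le_one (by positivity)]
  nlinarith [mul_le_mul_of_nonneg_right hac (mul_nonneg h1.le hD.le)]

end Split

section Construction

variable {𝕜 E : Type*} [RCLike 𝕜] [NormedAddCommGroup E] [InnerProductSpace 𝕜 E]

theorem smul_rankOne_add_smul_rankOne_eq (v u : E) {a b c p q r s : ℝ}
    (hp : p ^ 2 + c * r ^ 2 = a) (hq : q ^ 2 + c * s ^ 2 = b) (hpq : p * q + c * (r * s) = 0)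
    (x : E) :
    (a : 𝕜) • (⟪v, x⟫_𝕜 • v) + (b : 𝕜) • (⟪u, x⟫_𝕜 • u) =
      ⟪(p : 𝕜) • v + (q : 𝕜) • u, x⟫_𝕜 • ((p : 𝕜) • v + (q : 𝕜) • u) +
        (c : 𝕜) • (⟪(r : 𝕜) • v + (s : 𝕜) • u, x⟫_𝕜 • ((r : 𝕜) • v + (s : 𝕜) • u)) := by
  have hp' : (p : 𝕜) ^ 2 + c * r ^ 2 = a := by exact_mod_cast hp
  have hq' : (q : 𝕜) ^ 2 + c * s ^ 2 = b := by exact_mod_cast hq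
  have hpq' : (p : 𝕜) * q + c * (r * s) = 0 := by exact_mod_cast hpq
  simp only [inner_add_left, inner_smul_left, RCLike.conj_ofReal]
  match_scalars
  · linear_combination -(⟪v, x⟫_𝕜 * hp') - ⟪u, x⟫_𝕜 * hpq'
  · linear_combination -(⟪u, x⟫_𝕜 * hq') - ⟪v, x⟫_𝕜 * hpq'

theorem norm_ofReal_smul_add_ofReal_smul_s17 {u v : E} (hu : ‖u‖ = 1) (hv : ‖v‖ = 1)
    (huv : ⟪u, v⟫_𝕜 = 0) {p q : ℝ} (hpq : p ^ 2 + q ^ 2 = 1) :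
    ‖(p : 𝕜) • u + (q : 𝕜) • v‖ = 1 := by
  have horth : ⟪(p : 𝕜) • u, (q : 𝕜) • v⟫_𝕜 = 0 := by
    rw [inner_smul_left, inner_smul_right, huv, mul_zero, mul_zero]
  have h := norm_add_sq_eq_norm_sq_add_norm_sq_of_inner_eq_zero _ _ horth
  rw [norm_smul, norm_smul, RCLike.norm_ofReal, RCLike.norm_ofReal, hu, hv] at h
  nlinarith [norm_nonneg ((p : 𝕜) • u + (q : 𝕜) • v), sq_abs p, sq_abs q]

variable (𝕜) (g : ℕ → E) (w : ℕ → ℝ)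

noncomputable def residualVec : ℕ → E
  | 0 => g 0
  | n + 1 =>
    (restFst (w n) (w (n + 1)) : 𝕜) • residualVec n + (restSnd (w n) (w (n + 1)) : 𝕜) • g (n + 1)

noncomputable def summandVec (n : ℕ) : E :=
  (headFst (w n) (w (n + 1)) : 𝕜) • residualVec 𝕜 g w n +
    (headSnd (w n) (w (n + 1)) : 𝕜) • g (n + 1)

variable {𝕜 g w}

theorem residualVec_mem_span (n : ℕ) : residualVec 𝕜 g w n ∈ Submodule.span 𝕜 (Set.range g) := by
  induction n with
  | zero => exact Submodule.subset_span ⟨0, rfl⟩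
  | succ n ih =>
    exact add_mem (Submodule.smul_mem _ _ ih)
      (Submodule.smul_mem _ _ (Submodule.subset_span ⟨_, rfl⟩))

theorem inner_residualVec_eq_zero (hg : Orthonormal 𝕜 g) {n k : ℕ} (hnk : n < k) :
    ⟪residualVec 𝕜 g w n, g k⟫_𝕜 = 0 := by
  induction n with
  | zero => exact hg.inner_eq_zero hnk.ne
  | succ n ih =>
    simp [residualVec, inner_add_left, inner_smul_left, ih (by omega),
      hg.inner_eq_zero (by omega : n + 1 ≠ k)]

theorem inner_residualVec_succ (hg : Orthonormal 𝕜 g) {m n : ℕ} (hmn : m ≤ n) :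
    ⟪residualVec 𝕜 g w (n + 1), g m⟫_𝕜 =
      restFst (w n) (w (n + 1)) * ⟪residualVec 𝕜 g w n, g m⟫_𝕜 := by
  simp [residualVec, inner_add_left, inner_smul_left, hg.inner_eq_zero (by omega : n + 1 ≠ m)]

variable (hw0 : 0 ≤ w 0) (hw1 : 0 < w 1) (hmono : Monotone w) (hlt : ∀ n, w n < 1)
include hw0 hw1 hmono hlt

theorem weight_bounds (n : ℕ) : 0 ≤ w n ∧ w n ≤ w (n + 1) ∧ 0 < w (n + 1) ∧ w n < 1 :=
  ⟨hw0.trans (hmono n.zero_le), hmono n.le_succ, hw1.trans_le (hmono (by omega)), hlt n⟩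

theorem norm_residualVec (hg : Orthonormal 𝕜 g) (n : ℕ) : ‖residualVec 𝕜 g w n‖ = 1 := by
  induction n with
  | zero => exact hg.1 0
  | succ n ih =>
    obtain ⟨ha, hac, hc, ha1⟩ := weight_bounds hw0 hw1 hmono hlt n
    exact norm_ofReal_smul_add_ofReal_smul_s17 ih (hg.1 _) (inner_residualVec_eq_zero hg n.lt_succ_self)
      (restFst_sq_add_restSnd_sq ha hac hc ha1)

theorem norm_summandVec (hg : Orthonormal 𝕜 g) (n : ℕ) : ‖summandVec 𝕜 g w n‖ = 1 := by
  obtain ⟨ha, hac, hc, ha1⟩ := weight_bounds hw0 hw1 hmono hlt n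
  exact norm_ofReal_smul_add_ofReal_smul_s17 (norm_residualVec hw0 hw1 hmono hlt hg n) (hg.1 _)
    (inner_residualVec_eq_zero hg n.lt_succ_self) (headFst_sq_add_headSnd_sq ha hac hc ha1)

theorem sum_range_summandVec_add_residualVec (x : E) (n : ℕ) :
    ∑ j ∈ range n, ⟪summandVec 𝕜 g w j, x⟫_𝕜 • summandVec 𝕜 g w j +
        (w n : 𝕜) • (⟪residualVec 𝕜 g w n, x⟫_𝕜 • residualVec 𝕜 g w n) =
      (w 0 : 𝕜) • (⟪g 0, x⟫_𝕜 • g 0) +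
        ∑ j ∈ range n, ((1 + w (j + 1) - w j : ℝ) : 𝕜) • (⟪g (j + 1), x⟫_𝕜 • g (j + 1)) := by
  induction n with
  | zero => simp [residualVec]
  | succ n ih =>
    obtain ⟨ha, hac, hc, ha1⟩ := weight_bounds hw0 hw1 hmono hlt n
    have hstep := smul_rankOne_add_smul_rankOne_eq (𝕜 := 𝕜) (residualVec 𝕜 g w n) (g (n + 1))
      (headFst_sq_add_mul_restFst_sq ha hac hc ha1) (headSnd_sq_add_mul_restSnd_sq hac hc ha1)
      (headFst_mul_headSnd_add_mul ha hac hc ha1) x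
    rw [sum_range_succ, sum_range_succ, ← add_assoc, ← ih, add_assoc, add_assoc, hstep]
    rfl

end Construction

section Limits

variable {𝕜 E : Type*} [RCLike 𝕜] [NormedAddCommGroup E] [InnerProductSpace 𝕜 E]
variable {g : ℕ → E} {w : ℕ → ℝ}
variable (hw0 : 0 ≤ w 0) (hw1 : 0 < w 1) (hmono : Monotone w) (hlt : ∀ n, w n < 1)
  (hlim : Tendsto w atTop (𝓝 1))
include hw0 hw1 hmono hlt hlim

theorem tendsto_inner_residualVec_generator (hg : Orthonormal 𝕜 g) (m : ℕ) :
    Tendsto (fun n => ⟪residualVec 𝕜 g w n, g m⟫_𝕜) atTop (𝓝 0) := by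
  set s := fun k => ‖⟪residualVec 𝕜 g w (k + m), g m⟫_𝕜‖ ^ 2
  have hs : Tendsto s atTop (𝓝 0) := by
    refine tendsto_zero_of_mul_one_add_le
      (r := fun k => (w (k + 1 + m) - w (k + m)) / (1 - w (k + m))) (fun _ => by positivity)
      (fun k => div_nonneg (sub_nonneg.2 (hmono (by omega))) (sub_nonneg.2 (hlt _).le))
      (fun k => ?_) ?_
    · obtain ⟨ha, hac, hc, ha1⟩ := weight_bounds hw0 hw1 hmono hlt (k + m)
      have hdecay := restFst_sq_mul_one_add_le ha hac hc ha1
      simp only [s, add_right_comm k 1 m, inner_residualVec_succ hg (Nat.le_add_left m k),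
        norm_mul, RCLike.norm_ofReal, mul_pow, sq_abs]
      nlinarith [sq_nonneg ‖⟪residualVec 𝕜 g w (k + m), g m⟫_𝕜‖]
    · exact tendsto_sum_range_div_one_sub_atTop (w := fun k => w (k + m))
        (fun a b hab => hmono (Nat.add_le_add_right hab m)) (fun k => hlt _)
        (hlim.comp (tendsto_add_atTop_nat m))
  rw [← tendsto_add_atTop_iff_nat m, tendsto_zero_iff_norm_tendsto_zero]
  simpa [s, Real.sqrt_sq (norm_nonneg _)] using hs.sqrt

variable [CompleteSpace E]

theorem tendsto_inner_residualVec (hg : Orthonormal 𝕜 g) (x : E) :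
    Tendsto (fun n => ⟪residualVec 𝕜 g w n, x⟫_𝕜) atTop (𝓝 0) := by
  refine tendsto_inner_zero_of_mem_span (fun n => (norm_residualVec hw0 hw1 hmono hlt hg n).le)
    residualVec_mem_span ?_ x
  rintro _ ⟨m, rfl⟩
  exact tendsto_inner_residualVec_generator hw0 hw1 hmono hlt hlim hg m

theorem hasSum_summandVec (hg : Orthonormal 𝕜 g) {T : E →L[𝕜] E}
    (hT : ∀ x, HasSum (fun j => ((1 + w (j + 1) - w j : ℝ) : 𝕜) • (⟪g (j + 1), x⟫_𝕜 • g (j + 1)))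
      (T x - (w 0 : 𝕜) • (⟪g 0, x⟫_𝕜 • g 0))) (x : E) :
    HasSum (fun j => ⟪summandVec 𝕜 g w j, x⟫_𝕜 • summandVec 𝕜 g w j) (T x) := by
  refine hasSum_inner_smul_of_tendsto (fun x => ?_) x
  have hres : Tendsto (fun n => (w n : 𝕜) • (⟪residualVec 𝕜 g w n, x⟫_𝕜 • residualVec 𝕜 g w n))
      atTop (𝓝 0) := by
    refine squeeze_zero_norm (fun n => ?_)
      (tendsto_zero_iff_norm_tendsto_zero.1 (tendsto_inner_residualVec hw0 hw1 hmono hlt hlim hg x))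
    obtain ⟨ha, -, -, ha1⟩ := weight_bounds hw0 hw1 hmono hlt n
    rw [norm_smul, norm_smul, norm_residualVec hw0 hw1 hmono hlt hg, RCLike.norm_ofReal,
      abs_of_nonneg ha, mul_one]
    exact mul_le_of_le_one_left (norm_nonneg _) ha1.le
  have h := ((hT x).tendsto_sum_nat.const_add ((w 0 : 𝕜) • (⟪g 0, x⟫_𝕜 • g 0))).sub hres
  rw [add_sub_cancel, sub_zero] at h
  refine h.congr fun n => ?_
  rw [← sum_range_summandVec_add_residualVec hw0 hw1 hmono hlt, add_sub_cancel_right]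

end Limits

variable {H : Type*} [NormedAddCommGroup H] [InnerProductSpace ℂ H] [CompleteSpace H]

/-- Lemma 4.1(i): let `(g₀, g₁, g₂, …)` be orthonormal vectors, `μ_j > 0` with
`λ = Σ_j μ_j ≤ 1`, and let `A = (1-λ)(g₀⊗g₀) + Σ_{j≥1} (1+μ_j)(g_j⊗g_j)` (strong
convergence).  Then `A` is a strongly convergent sum of rank-one projections. -/
theorem stmt_17 (g : ℕ → H) (horth : ∀ i j, ⟪g i, g j⟫_ℂ = if i = j then 1 else 0)
    (μ : ℕ → ℝ) (hμ : ∀ j, 0 < μ j) (hsummable : Summable μ)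
    (lam : ℝ) (hlam : lam = ∑' j, μ j) (hlam1 : lam ≤ 1)
    (A : H →L[ℂ] H)
    (hA : ∀ x : H, HasSum (fun j : ℕ => ((1 + μ j : ℝ) : ℂ) • (⟪g (j + 1), x⟫_ℂ • g (j + 1)))
      (A x - ((1 - lam : ℝ) : ℂ) • (⟪g 0, x⟫_ℂ • g 0))) :
    ∃ P : ℕ → (H →L[ℂ] H), (∀ j, IsRankOneProjection (P j)) ∧
      ∀ x : H, HasSum (fun j => P j x) (A x) := by
  set w : ℕ → ℝ := fun n => 1 - lam + ∑ j ∈ range n, μ j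
  have hw_succ : ∀ n, w (n + 1) = w n + μ n := fun n => by
    simp only [w, sum_range_succ]
    ring
  have hw_zero : w 0 = 1 - lam := by simp [w]
  have hw0 : 0 ≤ w 0 := by rw [hw_zero]; linarith
  have hw1 : 0 < w 1 := by rw [hw_succ, hw_zero]; linarith [hμ 0]
  have hmono : Monotone w := monotone_nat_of_le_succ fun n => by linarith [hw_succ n, hμ n]
  have hlt : ∀ n, w n < 1 := fun n => by
    have := hsummable.sum_le_tsum (range (n + 1)) fun j _ => (hμ j).le
    rw [sum_range_succ, ← hlam] at this
    simp only [w]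
    linarith [hμ n]
  have hlim : Tendsto w atTop (𝓝 1) := by
    have := hsummable.hasSum.tendsto_sum_nat.const_add (1 - lam)
    rwa [← hlam, sub_add_cancel] at this
  have hg : Orthonormal ℂ g := orthonormal_iff_ite.2 horth
  refine ⟨fun n => rankOne (summandVec ℂ g w n),
    fun n => ⟨_, norm_summandVec hw0 hw1 hmono hlt hg n, rfl⟩,
    hasSum_summandVec hw0 hw1 hmono hlt hlim hg fun x => ?_⟩
  have hcoef : ∀ j, 1 + w (j + 1) - w j = 1 + μ j := fun j => by rw [hw_succ]; ring
  simp only [hcoef, hw_zero]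
  -- `exact`, not `simpa`: the coercions `ℝ → ℂ` via `RCLike` and via `Complex.ofReal` agree only
  -- after unfolding
  exact hA x
end

section
/- Consider real sequences defined as follows: δ_j < 0 strictly increasing with δ_j ↑ 0, and σ_j := (1+δ_{j-1})δ_{j-1} / ((1+δ_j)(2δ_{j-1}-δ_j)) for j > 1 with 1 + δ_1 > 0. Then 0 < σ_j < 1 for all j > 1, 1 − σ_j > (1/2)(δ_{j-1}−δ_j)/δ_{j-1} > 0, and Σ_{j=2}^∞ (1−σ_j) = ∞; consequently ∏_{j=2}^n σ_j → 0 as n → ∞. -/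
open scoped Topology

/-- The elementary estimates underlying Lemma 4.1(i): if `(δ_j)` is a strictly increasing
negative sequence with `δ_0 > -1` tending to `0`, and
`σ_{j+1} = ((1+δ_j)δ_j)/((1+δ_{j+1})(2δ_j − δ_{j+1}))`, then `0 < σ_{j+1} < 1`,
`1 − σ_{j+1} > (1/2)(δ_j − δ_{j+1})/δ_j > 0`, the series `Σ (1−σ_{j+1})` diverges, and
consequently the partial products `∏ σ_{j+1}` tend to `0`. -/
theorem stmt_19 (δ : ℕ → ℝ) (h1 : -1 < δ 0) (hneg : ∀ j, δ j < 0)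
    (hmono : StrictMono δ) (hlim : Filter.Tendsto δ Filter.atTop (𝓝 0))
    (σ : ℕ → ℝ)
    (hσ : ∀ j, σ (j + 1) = ((1 + δ j) * δ j) / ((1 + δ (j + 1)) * (2 * δ j - δ (j + 1)))) :
    (∀ j, 0 < σ (j + 1) ∧ σ (j + 1) < 1) ∧
    (∀ j, 1 - σ (j + 1) > (1 / 2) * ((δ j - δ (j + 1)) / δ j) ∧
      (0 : ℝ) < (1 / 2) * ((δ j - δ (j + 1)) / δ j)) ∧
    ¬ Summable (fun j => 1 - σ (j + 1)) ∧
    Filter.Tendsto (fun n => ∏ j ∈ Finset.range n, σ (j + 1)) Filter.atTop (𝓝 0) := by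
  have h1pos : ∀ j, 0 < 1 + δ j := by
    intro j
    have := hmono.monotone (Nat.zero_le j)
    linarith
  have hlt : ∀ j, δ j < δ (j + 1) := fun j => hmono (Nat.lt_succ_self j)
  have hDneg : ∀ j, (1 + δ (j + 1)) * (2 * δ j - δ (j + 1)) < 0 := by
    intro j
    have h := hlt j
    have h2 := hneg (j + 1)
    exact mul_neg_of_pos_of_neg (h1pos _) (by linarith)
  have hNneg : ∀ j, (1 + δ j) * δ j < 0 := fun j =>
    mul_neg_of_pos_of_neg (h1pos j) (hneg j)
  have hσpos : ∀ j, 0 < σ (j + 1) := by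
    intro j
    rw [hσ]
    exact div_pos_of_neg_of_neg (hNneg j) (hDneg j)
  have hgpos : ∀ j, (0 : ℝ) < (1 / 2) * ((δ j - δ (j + 1)) / δ j) := by
    intro j
    have h := hlt j
    have h2 := hneg j
    have : 0 < (δ j - δ (j + 1)) / δ j := div_pos_of_neg_of_neg (by linarith) h2
    linarith
  have hkey : ∀ j, (1 / 2) * ((δ j - δ (j + 1)) / δ j) < 1 - σ (j + 1) := by
    intro j
    have hd := hneg j
    have he := hneg (j + 1)
    have hde := hlt j
    have h1e := h1pos (j + 1)
    have hD := hDneg j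
    have expand : (1 - ((1 + δ j) * δ j) / ((1 + δ (j + 1)) * (2 * δ j - δ (j + 1))))
        - (1 / 2) * ((δ j - δ (j + 1)) / δ j)
        = ((δ (j + 1) - δ j) * ((-δ (j + 1)) * (1 + δ (j + 1) - 2 * δ j)
            + 2 * (-δ j) * (δ (j + 1) - δ j)))
          / (2 * δ j * ((1 + δ (j + 1)) * (2 * δ j - δ (j + 1)))) := by
      have hd0 : δ j ≠ 0 := hd.ne
      have hD0 : (1 + δ (j + 1)) * (2 * δ j - δ (j + 1)) ≠ 0 := hD.ne
      have h1e0 : 1 + δ (j + 1) ≠ 0 := h1e.ne'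
      have h2e0 : δ j * 2 - δ (j + 1) ≠ 0 := (by linarith : δ j * 2 - δ (j + 1) < 0).ne
      field_simp
      ring
    have hnum : 0 < (δ (j + 1) - δ j) * ((-δ (j + 1)) * (1 + δ (j + 1) - 2 * δ j)
        + 2 * (-δ j) * (δ (j + 1) - δ j)) := by
      apply mul_pos (by linarith)
      have ha : 0 < (-δ (j + 1)) * (1 + δ (j + 1) - 2 * δ j) :=
        mul_pos (by linarith) (by linarith)
      have hb : 0 < 2 * (-δ j) * (δ (j + 1) - δ j) :=
        mul_pos (by linarith) (by linarith)
      linarith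
    have hden : 0 < 2 * δ j * ((1 + δ (j + 1)) * (2 * δ j - δ (j + 1))) :=
      mul_pos_of_neg_of_neg (by linarith) hD
    have hpos := div_pos hnum hden
    rw [hσ]
    linarith [expand ▸ hpos]
  -- divergence of the series
  have hnotsum : ¬ Summable (fun j => 1 - σ (j + 1)) := by
    intro hs
    have hg : Summable (fun j => (1 / 2) * ((δ j - δ (j + 1)) / δ j)) :=
      Summable.of_nonneg_of_le (fun j => (hgpos j).le) (fun j => (hkey j).le) hs
    have hconv := hg.hasSum.tendsto_sum_nat
    have hcauchy := hconv.cauchySeq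
    rw [Metric.cauchySeq_iff'] at hcauchy
    obtain ⟨N, hN⟩ := hcauchy (1 / 4) (by norm_num)
    have hev : ∀ᶠ n in Filter.atTop, δ N / 2 < δ n := by
      apply hlim.eventually_const_lt
      have := hneg N; linarith
    obtain ⟨n, hn, hnN⟩ := (hev.and (Filter.eventually_ge_atTop N)).exists
    have hbound := hN n hnN
    have htel : ∑ j ∈ Finset.Ico N n, (δ (j + 1) - δ j) = δ n - δ N := by
      rw [Finset.sum_Ico_eq_sub _ hnN, Finset.sum_range_sub, Finset.sum_range_sub]
      ring
    have hsum_lb : (1 / 2) * ((δ n - δ N) / (-δ N))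
        ≤ ∑ j ∈ Finset.Ico N n, (1 / 2) * ((δ j - δ (j + 1)) / δ j) := by
      calc (1 / 2) * ((δ n - δ N) / (-δ N))
          = ∑ j ∈ Finset.Ico N n, (1 / 2) * ((δ (j + 1) - δ j) / (-δ N)) := by
            rw [← htel, Finset.sum_div, Finset.mul_sum]
        _ ≤ ∑ j ∈ Finset.Ico N n, (1 / 2) * ((δ j - δ (j + 1)) / δ j) := by
            apply Finset.sum_le_sum
            intro j hj
            have hjN : N ≤ j := (Finset.mem_Ico.mp hj).1
            have hδjN : δ N ≤ δ j := hmono.monotone hjN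
            have hj0 := hneg j
            have hN0 := hneg N
            have hjd := hlt j
            have heq : (δ j - δ (j + 1)) / δ j = (δ (j + 1) - δ j) / (-δ j) := by
              ring
            rw [heq]
            have := div_le_div_of_nonneg_left (le_of_lt (by linarith : (0:ℝ) < δ (j+1) - δ j))
              (by linarith : (0:ℝ) < -δ j) (by linarith : -δ j ≤ -δ N)
            linarith
    have hqtr : (1 : ℝ) / 4 < (1 / 2) * ((δ n - δ N) / (-δ N)) := by
      have hN0 := hneg N
      have : (1 : ℝ) / 2 < (δ n - δ N) / (-δ N) := by
        rw [lt_div_iff₀ (by linarith : (0:ℝ) < -δ N)]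
        linarith
      linarith
    have hIco : ∑ j ∈ Finset.Ico N n, (1 / 2) * ((δ j - δ (j + 1)) / δ j)
        = (∑ j ∈ Finset.range n, (1 / 2) * ((δ j - δ (j + 1)) / δ j))
          - ∑ j ∈ Finset.range N, (1 / 2) * ((δ j - δ (j + 1)) / δ j) :=
      Finset.sum_Ico_eq_sub _ hnN
    rw [Real.dist_eq, abs_lt] at hbound
    linarith [hbound.2, hIco ▸ hsum_lb]
  refine ⟨fun j => ⟨hσpos j, by have := hkey j; have := hgpos j; linarith⟩,
    fun j => ⟨hkey j, hgpos j⟩, hnotsum, ?_⟩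
  -- product tends to zero
  have hfnonneg : ∀ j, 0 ≤ 1 - σ (j + 1) := fun j => by
    have := hkey j; have := hgpos j; linarith
  have hdiv : Filter.Tendsto (fun n => ∑ j ∈ Finset.range n, (1 - σ (j + 1)))
      Filter.atTop Filter.atTop :=
    (not_summable_iff_tendsto_nat_atTop_of_nonneg hfnonneg).mp hnotsum
  have hlogle : ∀ n, ∑ j ∈ Finset.range n, Real.log (σ (j + 1))
      ≤ -(∑ j ∈ Finset.range n, (1 - σ (j + 1))) := by
    intro n
    rw [← Finset.sum_neg_distrib]
    apply Finset.sum_le_sum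
    intro j _
    have := Real.log_le_sub_one_of_pos (hσpos j)
    linarith
  have hnegdiv : Filter.Tendsto (fun n => -(∑ j ∈ Finset.range n, (1 - σ (j + 1))))
      Filter.atTop Filter.atBot := Filter.tendsto_neg_atTop_atBot.comp hdiv
  have hlogtend : Filter.Tendsto (fun n => ∑ j ∈ Finset.range n, Real.log (σ (j + 1)))
      Filter.atTop Filter.atBot := Filter.tendsto_atBot_mono hlogle hnegdiv
  have hrw : ∀ n, ∏ j ∈ Finset.range n, σ (j + 1)
      = Real.exp (∑ j ∈ Finset.range n, Real.log (σ (j + 1))) := by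
    intro n
    rw [Real.exp_sum]
    exact (Finset.prod_congr rfl fun j _ => (Real.exp_log (hσpos j)).symm)
  simp only [hrw]
  exact Real.tendsto_exp_atBot.comp hlogtend
end
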